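/- arXiv:1210.1863 — 4 statements merged into one kernel-verified Lean document; each statement's English description precedes it below -/
import Mathlib

section
/- For any open PL curve P = (P₀, P₁, …, Pₙ) in ℝ³ with distinct consecutive vertices, if the total curvature of P (the sum of exterior angles at the interior vertices) is strictly less than π, then P is a simple curve (the piecewise-linear path has no self-intersections). -/
open Filter Set

/-- The piecewise-linear path through the vertices `P 0, P 1, …`, parametrized so that
`plPath P j = P j` for natural numbers `j`, tracing the segment from `P j` to `P (j+1)`
linearly on `[j, j+1]`. -/
noncomputable def plPath (P : ℕ → EuclideanSpace ℝ (Fin 3)) (t : ℝ) :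
    EuclideanSpace ℝ (Fin 3) :=
  P ⌊t⌋₊ + (t - (⌊t⌋₊ : ℝ)) • (P (⌊t⌋₊ + 1) - P ⌊t⌋₊)

/-- The total curvature of the open PL curve with vertices `P 0, …, P n`: the sum of the
exterior angles at the interior vertices. -/
noncomputable def plTotalCurvature (n : ℕ) (P : ℕ → EuclideanSpace ℝ (Fin 3)) : ℝ :=
  ∑ j ∈ Finset.range (n - 1),
    InnerProductGeometry.angle (P (j + 1) - P j) (P (j + 2) - P (j + 1))

section Aux

open InnerProductGeometry RealInnerProductSpace

variable {E : Type*} [NormedAddCommGroup E] [InnerProductSpace ℝ E]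

lemma inner_eq_cos_angle_unit {x y : E} (hx : ‖x‖ = 1) (hy : ‖y‖ = 1) :
    ⟪x, y⟫ = Real.cos (angle x y) := by
  rw [cos_angle, hx, hy]; norm_num

/-- Triangle inequality for unoriented angles between unit vectors. -/
lemma angle_triangle_unit {x y z : E} (hx : ‖x‖ = 1) (hy : ‖y‖ = 1) (hz : ‖z‖ = 1) :
    angle x z ≤ angle x y + angle y z := by
  by_cases hπ : Real.pi ≤ angle x y + angle y z
  · exact (angle_le_pi x z).trans hπ
  push_neg at hπ
  set α := angle x y with hα
  set β := angle y z with hβ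
  have hα0 := angle_nonneg x y
  have hβ0 := angle_nonneg y z
  have hxy : ⟪x, y⟫ = Real.cos α := inner_eq_cos_angle_unit hx hy
  have hyz : ⟪y, z⟫ = Real.cos β := inner_eq_cos_angle_unit hy hz
  have hyy : ⟪y, y⟫ = 1 := by rw [real_inner_self_eq_norm_sq, hy]; norm_num
  have hxx : ⟪x, x⟫ = 1 := by rw [real_inner_self_eq_norm_sq, hx]; norm_num
  have hzz : ⟪z, z⟫ = 1 := by rw [real_inner_self_eq_norm_sq, hz]; norm_num
  have hxy' : ⟪y, x⟫ = Real.cos α := (real_inner_comm x y).trans hxy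
  have hyz' : ⟪z, y⟫ = Real.cos β := (real_inner_comm y z).trans hyz
  set x' : E := x - Real.cos α • y with hx'
  set z' : E := z - Real.cos β • y with hz'
  have hsα : 0 ≤ Real.sin α := Real.sin_nonneg_of_nonneg_of_le_pi hα0 (angle_le_pi x y)
  have hsβ : 0 ≤ Real.sin β := Real.sin_nonneg_of_nonneg_of_le_pi hβ0 (angle_le_pi y z)
  have hnx' : ‖x'‖ ^ 2 = Real.sin α ^ 2 := by
    rw [← real_inner_self_eq_norm_sq]
    simp only [hx', inner_sub_left, inner_sub_right, real_inner_smul_left,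
      real_inner_smul_right, hyy, hxx, hxy, hxy']
    nlinarith [Real.sin_sq_add_cos_sq α]
  have hnz' : ‖z'‖ ^ 2 = Real.sin β ^ 2 := by
    rw [← real_inner_self_eq_norm_sq]
    simp only [hz', inner_sub_left, inner_sub_right, real_inner_smul_left,
      real_inner_smul_right, hyy, hzz, hyz, hyz']
    nlinarith [Real.sin_sq_add_cos_sq β]
  have hnx : ‖x'‖ = Real.sin α := by
    rw [← Real.sqrt_sq (norm_nonneg x'), hnx', Real.sqrt_sq hsα]
  have hnz : ‖z'‖ = Real.sin β := by
    rw [← Real.sqrt_sq (norm_nonneg z'), hnz', Real.sqrt_sq hsβ]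
  have hinner : ⟪x, z⟫ = ⟪x', z'⟫ + Real.cos α * Real.cos β := by
    simp only [hx', hz', inner_sub_left, inner_sub_right, real_inner_smul_left,
      real_inner_smul_right, hyy, hxy, hxy', hyz, hyz']
    ring
  have habs := abs_real_inner_le_norm x' z'
  rw [hnx, hnz] at habs
  have hlow : -(Real.sin α * Real.sin β) ≤ ⟪x', z'⟫ := (abs_le.1 habs).1
  have key : Real.cos (α + β) ≤ ⟪x, z⟫ := by
    rw [Real.cos_add, hinner]; linarith
  have hxz : Real.cos (angle x z) = ⟪x, z⟫ := (inner_eq_cos_angle_unit hx hz).symm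
  have h1 : Real.cos (α + β) ≤ Real.cos (angle x z) := by rw [hxz]; exact key
  exact (Real.strictAntiOn_cos.le_iff_ge ⟨add_nonneg hα0 hβ0, hπ.le⟩
    ⟨angle_nonneg x z, angle_le_pi x z⟩).1 h1

/-- Spherical interpolation: a unit vector at prescribed angles along the arc from `u` to `w`. -/
lemma exists_unit_slerp {u w : E} (hu : ‖u‖ = 1) (hw : ‖w‖ = 1)
    (hθπ : angle u w < Real.pi) {φ : ℝ} (hφ0 : 0 ≤ φ) (hφθ : φ ≤ angle u w) :
    ∃ e : E, ‖e‖ = 1 ∧ angle u e = φ ∧ angle e w = angle u w - φ := by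
  set θ := angle u w with hθdef
  have hθ0 := angle_nonneg u w
  have hune : u ≠ 0 := by intro h; rw [h] at hu; simp at hu
  rcases eq_or_lt_of_le hθ0 with h0 | h0
  · have hφ : φ = 0 := le_antisymm (hφθ.trans h0.ge) hφ0
    refine ⟨u, hu, ?_, ?_⟩
    · rw [hφ]; exact angle_self hune
    · rw [hφ, sub_zero]
  · have hsθ : 0 < Real.sin θ := Real.sin_pos_of_pos_of_lt_pi h0 hθπ
    have huw : ⟪u, w⟫ = Real.cos θ := inner_eq_cos_angle_unit hu hw
    have huu : ⟪u, u⟫ = 1 := by rw [real_inner_self_eq_norm_sq, hu]; norm_num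
    have hww : ⟪w, w⟫ = 1 := by rw [real_inner_self_eq_norm_sq, hw]; norm_num
    set a : ℝ := Real.sin (θ - φ) / Real.sin θ with ha
    set b : ℝ := Real.sin φ / Real.sin θ with hb
    set e : E := a • u + b • w with he
    have hc : Real.cos θ = Real.cos (θ - φ) * Real.cos φ - Real.sin (θ - φ) * Real.sin φ := by
      rw [← Real.cos_add]; ring_nf
    have hs : Real.sin θ = Real.sin (θ - φ) * Real.cos φ + Real.cos (θ - φ) * Real.sin φ := by
      rw [← Real.sin_add]; ring_nf
    have hue : ⟪u, e⟫ = Real.cos φ := by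
      simp only [he, inner_add_right, real_inner_smul_right, huu, huw, ha, hb]
      field_simp
      rw [Real.sin_sub]; ring
    have hew : ⟪e, w⟫ = Real.cos (θ - φ) := by
      simp only [he, inner_add_left, real_inner_smul_left, huw, hww, ha, hb]
      field_simp
      rw [hc, hs]; ring_nf
      linear_combination (-(Real.sin φ)) * Real.sin_sq_add_cos_sq (θ - φ)
    have hkey : Real.sin (θ - φ) ^ 2 + 2 * Real.sin (θ - φ) * Real.sin φ * Real.cos θ
        + Real.sin φ ^ 2 = Real.sin θ ^ 2 := by
      rw [hc, hs]
      linear_combination (-(Real.sin (θ - φ)) ^ 2) * Real.sin_sq_add_cos_sq φ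
        - (Real.sin φ) ^ 2 * Real.sin_sq_add_cos_sq (θ - φ)
    have hwu : ⟪w, u⟫ = Real.cos θ := (real_inner_comm u w).trans huw
    have hee : ⟪e, e⟫ = a ^ 2 + 2 * a * b * Real.cos θ + b ^ 2 := by
      simp only [he, inner_add_left, inner_add_right, real_inner_smul_left,
        real_inner_smul_right, huu, hww, huw, hwu]
      ring
    have hab : a ^ 2 + 2 * a * b * Real.cos θ + b ^ 2 = 1 := by
      have hθne : Real.sin θ ≠ 0 := ne_of_gt hsθ
      have hq : a ^ 2 + 2 * a * b * Real.cos θ + b ^ 2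
          = (Real.sin (θ - φ) ^ 2 + 2 * Real.sin (θ - φ) * Real.sin φ * Real.cos θ
            + Real.sin φ ^ 2) / Real.sin θ ^ 2 := by
        rw [ha, hb]; field_simp
      rw [hq, hkey, div_self (pow_ne_zero 2 hθne)]
    have hne2 : ‖e‖ ^ 2 = 1 := by rw [← real_inner_self_eq_norm_sq, hee, hab]
    have hne : ‖e‖ = 1 := by
      rw [← Real.sqrt_sq (norm_nonneg e), hne2, Real.sqrt_one]
    have hφπ : φ ≤ Real.pi := hφθ.trans (angle_le_pi u w)
    have h1 : Real.cos (angle u e) = Real.cos φ := by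
      rw [← inner_eq_cos_angle_unit hu hne]; exact hue
    have h2 : Real.cos (angle e w) = Real.cos (θ - φ) := by
      rw [← inner_eq_cos_angle_unit hne hw]; exact hew
    exact ⟨e, hne,
      Real.injOn_cos ⟨angle_nonneg _ _, angle_le_pi _ _⟩ ⟨hφ0, hφπ⟩ h1,
      Real.injOn_cos ⟨angle_nonneg _ _, angle_le_pi _ _⟩
        ⟨by linarith, by linarith [angle_le_pi u w]⟩ h2⟩

/-- If unit vectors `v 0, …, v (n-1)` form a chain of total angular length `< π`, then
they all lie in an open hemisphere. -/
lemma exists_good_direction (n : ℕ) (hn : 1 ≤ n) (v : ℕ → E)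
    (hv : ∀ j < n, ‖v j‖ = 1)
    (hSπ : (∑ j ∈ Finset.range (n - 1), angle (v j) (v (j + 1))) < Real.pi) :
    ∃ e : E, ‖e‖ = 1 ∧ ∀ j < n, angle (v j) e < Real.pi / 2 := by
  classical
  set s : ℕ → ℝ := fun i => ∑ j ∈ Finset.range i, angle (v j) (v (j + 1)) with hsdef
  set S : ℝ := s (n - 1) with hSdef
  have hSπ' : S < Real.pi := hSπ
  have hsnonneg : ∀ i, 0 ≤ s i := fun i =>
    Finset.sum_nonneg fun j _ => angle_nonneg _ _
  have hsmono : ∀ i j : ℕ, i ≤ j → s i ≤ s j := fun i j hij =>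
    Finset.sum_le_sum_of_subset_of_nonneg (Finset.range_subset_range.2 hij)
      fun k _ _ => angle_nonneg _ _
  have hvne : ∀ j < n, v j ≠ 0 := by
    intro j hj h
    have := hv j hj
    rw [h] at this; simp at this
  have hchain : ∀ m, m < n → ∀ i, i ≤ m → angle (v i) (v m) ≤ s m - s i := by
    intro m
    induction m with
    | zero =>
      intro hm i hi
      have hi0 : i = 0 := Nat.le_zero.mp hi
      subst hi0
      rw [angle_self (hvne 0 hm)]; simp
    | succ m ih =>
      intro hm i hi
      rcases eq_or_lt_of_le hi with h | h
      · subst h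
        rw [angle_self (hvne _ hm)]; simp
      · have hi' : i ≤ m := by omega
        have h1 := ih (by omega) i hi'
        have h2 : angle (v i) (v (m + 1)) ≤ angle (v i) (v m) + angle (v m) (v (m + 1)) :=
          angle_triangle_unit (hv i (by omega)) (hv m (by omega)) (hv (m + 1) hm)
        have h3 : s (m + 1) = s m + angle (v m) (v (m + 1)) := Finset.sum_range_succ _ _
        linarith
  have hs0 : s 0 = 0 := by simp [hsdef]
  have hpi := Real.pi_pos
  by_cases hS0 : S ≤ 0
  · refine ⟨v 0, hv 0 hn, fun j hj => ?_⟩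
    have h1 : angle (v 0) (v j) ≤ s j - s 0 := hchain j hj 0 (Nat.zero_le j)
    have h2 : s j ≤ S := hsmono j (n - 1) (by omega)
    rw [angle_comm]
    linarith
  · push_neg at hS0
    have hwit : S / 2 < s (n - 1) := by rw [← hSdef]; linarith
    have hex : ∃ j, S / 2 < s j := ⟨n - 1, hwit⟩
    have hk0spec : S / 2 < s (Nat.find hex) := Nat.find_spec hex
    have hk0le : Nat.find hex ≤ n - 1 := Nat.find_le hwit
    have hk0pos : 0 < Nat.find hex := by
      rcases Nat.eq_zero_or_pos (Nat.find hex) with h | h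
      · exfalso; rw [h, hs0] at hk0spec; linarith
      · exact h
    set k := Nat.find hex - 1 with hk
    have hkk : k + 1 = Nat.find hex := by omega
    have hkmin : s k ≤ S / 2 := not_lt.mp (Nat.find_min hex (by omega))
    have hk1 : S / 2 < s (k + 1) := by rw [hkk]; exact hk0spec
    have hk1n1 : k + 1 ≤ n - 1 := by omega
    have hk1n : k + 1 < n := by omega
    set θ := angle (v k) (v (k + 1)) with hθ
    have hsucc : s (k + 1) = s k + θ := Finset.sum_range_succ _ _
    have hθS : θ ≤ S := by
      have h4 : s (k + 1) ≤ S := hsmono (k + 1) (n - 1) hk1n1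
      linarith [hsnonneg k]
    have hθπ : θ < Real.pi := lt_of_le_of_lt hθS hSπ'
    have hφ0 : 0 ≤ S / 2 - s k := by linarith
    have hφθ : S / 2 - s k ≤ θ := by linarith
    obtain ⟨e, he1, heu, hew⟩ :=
      exists_unit_slerp (hv k (by omega)) (hv (k + 1) hk1n) hθπ hφ0 hφθ
    refine ⟨e, he1, fun j hj => ?_⟩
    have hS2 : S / 2 < Real.pi / 2 := by linarith
    rcases le_or_gt j k with hjk | hjk
    · have h1 : angle (v j) (v k) ≤ s k - s j := hchain k (by omega) j hjk
      have h2 : angle (v j) e ≤ angle (v j) (v k) + angle (v k) e :=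
        angle_triangle_unit (hv j hj) (hv k (by omega)) he1
      rw [heu] at h2
      linarith [hsnonneg j]
    · have hjk' : k + 1 ≤ j := hjk
      have h1 : angle (v (k + 1)) (v j) ≤ s j - s (k + 1) := hchain j hj (k + 1) hjk'
      have h2 : angle (v j) e ≤ angle (v j) (v (k + 1)) + angle (v (k + 1)) e :=
        angle_triangle_unit (hv j hj) (hv (k + 1) hk1n) he1
      have h3 : angle (v (k + 1)) e = θ - (S / 2 - s k) := by
        rw [angle_comm]; exact hew
      have h4 : s j ≤ S := hsmono j (n - 1) (by omega)
      rw [angle_comm (v j) (v (k + 1))] at h2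
      linarith

end Aux

open InnerProductGeometry RealInnerProductSpace in
/-- An open PL curve `(P₀, …, Pₙ)` in `ℝ³` with distinct consecutive vertices
whose total curvature is strictly less than `π` is simple: the piecewise-linear path has no
self-intersections. -/
theorem plPath_injOn_of_totalCurvature_lt_pi
    (n : ℕ) (hn : 1 ≤ n) (P : ℕ → EuclideanSpace ℝ (Fin 3))
    (hdist : ∀ j < n, P j ≠ P (j + 1))
    (htc : plTotalCurvature n P < Real.pi) :
    Set.InjOn (plPath P) (Icc (0 : ℝ) n) := by
  classical
  set u : ℕ → EuclideanSpace ℝ (Fin 3) := fun j => P (j + 1) - P j with hu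
  have hune : ∀ j < n, u j ≠ 0 := fun j hj => sub_ne_zero.2 (Ne.symm (hdist j hj))
  set v : ℕ → EuclideanSpace ℝ (Fin 3) := fun j => ‖u j‖⁻¹ • u j with hvdef
  have hvnorm : ∀ j < n, ‖v j‖ = 1 := fun j hj => norm_smul_inv_norm (hune j hj)
  have hsum : (∑ j ∈ Finset.range (n - 1), angle (v j) (v (j + 1)))
      = plTotalCurvature n P := by
    apply Finset.sum_congr rfl
    intro j hj
    rw [Finset.mem_range] at hj
    have hj1 : j < n := by omega
    have hj2 : j + 1 < n := by omega
    show angle (‖u j‖⁻¹ • u j) (‖u (j + 1)‖⁻¹ • u (j + 1)) = _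
    rw [angle_smul_left_of_pos _ _ (inv_pos.2 (norm_pos_iff.2 (hune j hj1))),
      angle_smul_right_of_pos _ _ (inv_pos.2 (norm_pos_iff.2 (hune (j + 1) hj2)))]
  obtain ⟨e, he1, hang⟩ := exists_good_direction n hn v hvnorm (by rw [hsum]; exact htc)
  have hpos : ∀ j, j < n → 0 < ⟪u j, e⟫ := by
    intro j hj
    have h1 : Real.cos (angle (v j) e) = ⟪v j, e⟫ :=
      (inner_eq_cos_angle_unit (hvnorm j hj) he1).symm
    have h2 : 0 < Real.cos (angle (v j) e) := by
      apply Real.cos_pos_of_mem_Ioo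
      constructor
      · have h5 := angle_nonneg (v j) e
        have h6 := Real.pi_pos
        linarith
      · exact hang j hj
    have h3 : ⟪v j, e⟫ = ‖u j‖⁻¹ * ⟪u j, e⟫ := real_inner_smul_left _ _ _
    have h4 : 0 < ‖u j‖ := norm_pos_iff.2 (hune j hj)
    rw [h1, h3] at h2
    nlinarith [inv_pos.2 h4, h2]
  set g : ℕ → ℝ := fun j => ⟪P j, e⟫ with hg
  set f : ℝ → ℝ := fun t => ⟪plPath P t, e⟫ with hfdef
  have hgc : ∀ j : ℕ, g (j + 1) = g j + ⟪u j, e⟫ := by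
    intro j
    simp only [hg, hu]
    rw [inner_sub_left]
    ring
  have gmono : ∀ i j : ℕ, i ≤ j → j ≤ n → g i ≤ g j := by
    intro i j hij hjn
    induction j with
    | zero => simp [Nat.le_zero.mp hij]
    | succ m ih =>
      rcases Nat.lt_or_ge i (m + 1) with h | h
      · have := ih (by omega) (by omega)
        have h2 := hpos m (by omega)
        rw [hgc m]
        linarith
      · have : i = m + 1 := by omega
        rw [this]
  have hf : ∀ t : ℝ, f t = g ⌊t⌋₊ + (t - (⌊t⌋₊ : ℝ)) * ⟪u ⌊t⌋₊, e⟫ := by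
    intro t
    simp only [hfdef, plPath, hg, hu, inner_add_left, real_inner_smul_left]
  have hmono : StrictMonoOn f (Icc (0 : ℝ) n) := by
    rintro s ⟨hs0, hsn⟩ t ⟨ht0, htn⟩ hst
    have hsn' : s < n := lt_of_lt_of_le hst htn
    have ha : ⌊s⌋₊ < n := (Nat.floor_lt hs0).2 hsn'
    have hab : ⌊s⌋₊ ≤ ⌊t⌋₊ := Nat.floor_mono hst.le
    have hbn : ⌊t⌋₊ ≤ n := by
      have := Nat.floor_mono htn
      simpa using this
    rcases eq_or_lt_of_le hab with hEq | hlt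
    · rw [hf s, hf t, ← hEq]
      have hc := hpos ⌊s⌋₊ ha
      nlinarith
    · have hfs : f s < g (⌊s⌋₊ + 1) := by
        rw [hf s, hgc ⌊s⌋₊]
        have hfr : s - (⌊s⌋₊ : ℝ) < 1 := by
          have := Nat.lt_floor_add_one s; linarith
        have hc := hpos ⌊s⌋₊ ha
        have hfl : (0 : ℝ) ≤ s - ⌊s⌋₊ := by
          have := Nat.floor_le hs0; linarith
        nlinarith
      have hmid : g (⌊s⌋₊ + 1) ≤ g ⌊t⌋₊ := gmono _ _ hlt hbn
      have hft : g ⌊t⌋₊ ≤ f t := by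
        rcases eq_or_lt_of_le (Nat.floor_le ht0) with hEq2 | hlt2
        · rw [hf t, ← hEq2]; simp
        · have hbn' : ⌊t⌋₊ < n := by
            rcases lt_or_eq_of_le hbn with h | h
            · exact h
            · exfalso
              rw [h] at hlt2
              linarith
          rw [hf t]
          have hc := hpos ⌊t⌋₊ hbn'
          nlinarith
      linarith
  intro s hs t ht heq
  by_contra hne
  have hfeq : f s = f t := by simp only [hfdef, heq]
  rcases lt_or_gt_of_ne hne with h | h
  · exact absurd hfeq (ne_of_lt (hmono hs ht h))
  · exact absurd hfeq.symm (ne_of_lt (hmono ht hs h))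
end

section
/- Let γ : [0,1] → ℝ³ be a C² regular simple curve, let t₀ ∈ (0,1), and let Π(t₀) be the plane through γ(t₀) normal to γ′(t₀). Suppose u ∈ (0, t₀) and v ∈ (t₀, 1) are such that the total curvatures of γ restricted to [u, t₀] and to [t₀, v] are each strictly less than π/2. Then γ([u, t₀]) and γ([t₀, v]) each meet Π(t₀) only at the point γ(t₀), and they lie on opposite sides of Π(t₀). -/
open Filter Set intervalIntegral

/-- The cross product of two vectors of Euclidean 3-space. -/
noncomputable def cross3 (v w : EuclideanSpace ℝ (Fin 3)) : EuclideanSpace ℝ (Fin 3) :=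
  (WithLp.equiv 2 (Fin 3 → ℝ)).symm
    (crossProduct (WithLp.equiv 2 (Fin 3 → ℝ) v) (WithLp.equiv 2 (Fin 3 → ℝ) w))

/-- The total curvature of a regular `C²` arc `γ` on `[u, v]`, computed from first and second
derivative functions `γ'`, `γ''` as `∫ |γ' × γ''| / |γ'|²` (equal to `∫ |κ| ds`). -/
noncomputable def arcTotalCurvature (γ' γ'' : ℝ → EuclideanSpace ℝ (Fin 3)) (u v : ℝ) : ℝ :=
  ∫ t in u..v, ‖cross3 (γ' t) (γ'' t)‖ / ‖γ' t‖ ^ 2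

open scoped RealInnerProductSpace

lemma cross3_norm_sq (a b : EuclideanSpace ℝ (Fin 3)) :
    ‖cross3 a b‖ ^ 2 = ‖a‖ ^ 2 * ‖b‖ ^ 2 - ⟪a, b⟫ ^ 2 := by
  rw [← real_inner_self_eq_norm_sq, ← real_inner_self_eq_norm_sq, ← real_inner_self_eq_norm_sq]
  simp only [cross3, PiLp.inner_apply, RCLike.inner_apply, starRingEnd_apply, star_trivial,
    WithLp.equiv_symm_apply, WithLp.equiv_apply, PiLp.toLp_apply, crossProduct, LinearMap.mk₂_apply,
    Fin.sum_univ_three, Matrix.cons_val_zero, Matrix.cons_val_one, Matrix.head_cons,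
    Matrix.cons_val_two, Matrix.tail_cons]
  ring

lemma tangent_deriv {γ' γ'' : ℝ → EuclideanSpace ℝ (Fin 3)} {t : ℝ}
    (h2 : HasDerivAt γ' (γ'' t) t) (hne : γ' t ≠ 0) :
    HasDerivAt (fun s => ‖γ' s‖⁻¹ • γ' s)
      (‖γ' t‖⁻¹ • γ'' t - (⟪γ' t, γ'' t⟫ / ‖γ' t‖ ^ 3) • γ' t) t := by
  have hr : (0 : ℝ) < ‖γ' t‖ := norm_pos_iff.2 hne
  have hs : HasDerivAt (fun s => ⟪γ' s, γ' s⟫) (⟪γ' t, γ'' t⟫ + ⟪γ'' t, γ' t⟫) t :=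
    h2.inner ℝ h2
  have hself : ⟪γ' t, γ' t⟫ ≠ 0 := by rw [real_inner_self_eq_norm_sq]; positivity
  have hsqrt := hs.sqrt hself
  have hnorm_eq : (fun s => Real.sqrt ⟪γ' s, γ' s⟫) = fun s => ‖γ' s‖ := by
    funext s; rw [real_inner_self_eq_norm_sq, Real.sqrt_sq (norm_nonneg _)]
  rw [hnorm_eq] at hsqrt
  have hval : (⟪γ' t, γ'' t⟫ + ⟪γ'' t, γ' t⟫) / (2 * Real.sqrt ⟪γ' t, γ' t⟫)
      = ⟪γ' t, γ'' t⟫ / ‖γ' t‖ := by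
    rw [real_inner_comm (γ'' t) (γ' t), real_inner_self_eq_norm_sq, Real.sqrt_sq (norm_nonneg _)]
    field_simp
    ring
  rw [hval] at hsqrt
  have hinv := hsqrt.inv hr.ne'
  have hmain := hinv.smul h2
  have hsc : -(⟪γ' t, γ'' t⟫ / ‖γ' t‖) / ‖γ' t‖ ^ 2 = -(⟪γ' t, γ'' t⟫ / ‖γ' t‖ ^ 3) := by
    rw [neg_div, div_div, neg_inj, show ‖γ' t‖ * ‖γ' t‖ ^ 2 = ‖γ' t‖ ^ 3 from by ring]
  rw [hsc] at hmain
  rw [sub_eq_add_neg, ← neg_smul]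
  exact hmain

lemma D_norm_eq {a b : EuclideanSpace ℝ (Fin 3)} (ha : a ≠ 0) :
    ‖(‖a‖⁻¹ • b - (⟪a, b⟫ / ‖a‖ ^ 3) • a : EuclideanSpace ℝ (Fin 3))‖
      = ‖cross3 a b‖ / ‖a‖ ^ 2 := by
  have hr : (0 : ℝ) < ‖a‖ := norm_pos_iff.2 ha
  have key : ‖(‖a‖⁻¹ • b - (⟪a, b⟫ / ‖a‖ ^ 3) • a : EuclideanSpace ℝ (Fin 3))‖ ^ 2
      = (‖cross3 a b‖ / ‖a‖ ^ 2) ^ 2 := by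
    rw [← real_inner_self_eq_norm_sq]
    simp only [inner_sub_left, inner_sub_right, real_inner_smul_left, real_inner_smul_right]
    rw [div_pow, cross3_norm_sq]
    rw [real_inner_self_eq_norm_sq a, real_inner_self_eq_norm_sq b, real_inner_comm b a]
    field_simp
    ring
  have h1 : (0 : ℝ) ≤ ‖cross3 a b‖ / ‖a‖ ^ 2 := by positivity
  calc ‖(‖a‖⁻¹ • b - (⟪a, b⟫ / ‖a‖ ^ 3) • a : EuclideanSpace ℝ (Fin 3))‖
      = Real.sqrt (‖(‖a‖⁻¹ • b - (⟪a, b⟫ / ‖a‖ ^ 3) • a : EuclideanSpace ℝ (Fin 3))‖ ^ 2) :=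
        (Real.sqrt_sq (norm_nonneg _)).symm
    _ = Real.sqrt ((‖cross3 a b‖ / ‖a‖ ^ 2) ^ 2) := by rw [key]
    _ = _ := Real.sqrt_sq h1

set_option maxHeartbeats 2000000 in
private lemma key_tangent {E : Type*} [NormedAddCommGroup E] [InnerProductSpace ℝ E] [CompleteSpace E]
    (T D : ℝ → E) (a b : ℝ) (hab : a < b)
    (hT : ∀ t ∈ Icc a b, HasDerivAt T (D t) t)
    (hD : Continuous D)
    (hunit : ∀ t ∈ Icc a b, ‖T t‖ = 1)
    (hK : (∫ t in a..b, ‖D t‖) < Real.pi / 2) :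
    ∀ t ∈ Icc a b, 0 < ⟪T t, T a⟫ := by
  have haI : a ∈ Icc a b := left_mem_Icc.2 hab.le
  have hbI : b ∈ Icc a b := right_mem_Icc.2 hab.le
  have hDn : Continuous fun t => ‖D t‖ := hD.norm
  set G : ℝ → ℝ := fun t => ∫ s in a..t, ‖D s‖ with hGdef
  have hGderiv : ∀ t, HasDerivAt G (‖D t‖) t := fun t =>
    (hDn.integral_hasStrictDerivAt a t).hasDerivAt
  have hGa : G a = 0 := integral_same
  have hG0 : ∀ t ∈ Icc a b, 0 ≤ G t := fun t ht =>
    intervalIntegral.integral_nonneg ht.1 fun s _ => norm_nonneg _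
  have hGmono : ∀ t ∈ Icc a b, G t ≤ G b := by
    intro t ht
    have h1 : G b - G t = ∫ s in t..b, ‖D s‖ :=
      integral_interval_sub_left (hDn.intervalIntegrable a b) (hDn.intervalIntegrable a t)
    have h2 : 0 ≤ ∫ s in t..b, ‖D s‖ :=
      intervalIntegral.integral_nonneg ht.2 fun s _ => norm_nonneg _
    linarith
  have hchord : ∀ t ∈ Icc a b, ‖T t - T a‖ ≤ G t := by
    intro t ht
    have h1 : ∀ x ∈ uIcc a t, HasDerivAt T (D x) x := by
      intro x hx
      rw [uIcc_of_le ht.1] at hx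
      exact hT x ⟨hx.1, le_trans hx.2 ht.2⟩
    have h2 : T t - T a = ∫ s in a..t, D s :=
      (intervalIntegral.integral_eq_sub_of_hasDerivAt h1 (hD.intervalIntegrable a t)).symm
    rw [h2]
    exact intervalIntegral.norm_integral_le_integral_norm ht.1
  have hKblt : G b < Real.pi / 2 := hK
  clear_value G
  clear hGdef hK
  set g : ℝ → ℝ := fun t => ⟪T t, T a⟫ with hgdef
  have hga : g a = 1 := by
    show ⟪T a, T a⟫ = 1
    rw [real_inner_self_eq_norm_sq, hunit a haI, one_pow]
  have hchord2 : ∀ t ∈ Icc a b, 1 - g t ≤ G t ^ 2 / 2 := by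
    intro t ht
    have h1 : ‖T t - T a‖ ^ 2 = 2 - 2 * g t := by
      rw [hgdef, norm_sub_sq_real, hunit t ht, hunit a haI]; ring
    nlinarith [hchord t ht, norm_nonneg (T t - T a), hG0 t ht]
  have horth : ∀ t ∈ Icc a b, ⟪T t, D t⟫ = 0 := by
    intro t ht
    have h1 : HasDerivWithinAt (fun s => ⟪T s, T s⟫) (⟪T t, D t⟫ + ⟪D t, T t⟫) (Icc a b) t :=
      (hT t ht).hasDerivWithinAt.inner ℝ (hT t ht).hasDerivWithinAt
    have h2 : HasDerivWithinAt (fun s => ⟪T s, T s⟫) 0 (Icc a b) t := by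
      have hc : ∀ s ∈ Icc a b, ⟪T s, T s⟫ = (1 : ℝ) := fun s hs => by
        rw [real_inner_self_eq_norm_sq, hunit s hs, one_pow]
      exact (hasDerivWithinAt_const t _ (1 : ℝ)).congr hc (hc t ht)
    have h3 : ⟪T t, D t⟫ + ⟪D t, T t⟫ = 0 :=
      UniqueDiffWithinAt.eq_deriv _ (uniqueDiffOn_Icc hab t ht) h1 h2
    have h4 := real_inner_comm (D t) (T t)
    linarith
  have hg' : ∀ t ∈ Icc a b, HasDerivAt g ⟪D t, T a⟫ t := by
    intro t ht
    have h1 := (hT t ht).inner ℝ (hasDerivAt_const t (T a))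
    rw [hgdef]
    simpa using h1
  have hg'bd : ∀ t ∈ Icc a b, |⟪D t, T a⟫| ≤ ‖D t‖ * Real.sqrt (1 - g t ^ 2) := by
    intro t ht
    have hDT : ⟪D t, T t⟫ = 0 := by
      rw [real_inner_comm]; exact horth t ht
    have h0 : ⟪D t, T a⟫ = ⟪D t, T a - g t • T t⟫ := by
      rw [inner_sub_right, real_inner_smul_right, hDT]
      ring
    have h1 : ‖T a - g t • T t‖ ^ 2 = 1 - g t ^ 2 := by
      have e1 : ⟪T a, g t • T t⟫ = g t * g t := by
        rw [real_inner_smul_right, hgdef, real_inner_comm]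
      have e2 : ‖g t • T t‖ ^ 2 = g t ^ 2 := by
        rw [norm_smul, mul_pow, hunit t ht]; simp [sq_abs]
      rw [norm_sub_sq_real, e1, e2, hunit a haI]; ring
    calc |⟪D t, T a⟫| = |⟪D t, T a - g t • T t⟫| := by rw [h0]
      _ ≤ ‖D t‖ * ‖T a - g t • T t‖ := abs_real_inner_le_norm _ _
      _ = ‖D t‖ * Real.sqrt (1 - g t ^ 2) := by
          rw [← h1, Real.sqrt_sq (norm_nonneg _)]
  clear_value g
  -- the bound M on ‖D‖
  obtain ⟨C, hC⟩ := isCompact_Icc.exists_bound_of_continuousOn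
    (hDn.continuousOn : ContinuousOn (fun t => ‖D t‖) (Icc a b))
  set M : ℝ := max C 1 with hMdef
  have hM1 : (1 : ℝ) ≤ M := le_max_right _ _
  have hM0 : (0 : ℝ) < M := lt_of_lt_of_le one_pos hM1
  have hMb : ∀ x ∈ Icc a b, ‖D x‖ ≤ M := by
    intro x hx
    have h1 := hC x hx
    rw [norm_norm] at h1
    exact le_trans h1 (le_max_left _ _)
  clear_value M
  clear hMdef hC
  -- choice of ε, Θ, ρ, δ
  have hKb0 : 0 ≤ G b := hG0 b hbI
  set ε : ℝ := (Real.pi / 2 - G b) / (2 * (b - a)) with hεdef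
  have hε0 : 0 < ε := div_pos (by linarith) (by linarith)
  set Θ : ℝ := G b + ε * (b - a) with hΘdef
  have hΘlt : Θ < Real.pi / 2 := by
    have hba : b - a ≠ 0 := ne_of_gt (by linarith)
    have h1 : ε * (b - a) = (Real.pi / 2 - G b) / 2 := by
      rw [hεdef]; field_simp
    rw [hΘdef, h1]; linarith
  have hΘ0 : 0 ≤ Θ := by
    have := mul_pos hε0 (by linarith : (0:ℝ) < b - a)
    rw [hΘdef]; linarith
  clear_value ε
  clear hεdef
  set ρ : ℝ := Real.cos Θ with hρdef
  have hρ0 : 0 < ρ := Real.cos_pos_of_mem_Ioo ⟨by linarith [Real.pi_pos], hΘlt⟩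
  have hρcos : ∀ x, 0 ≤ x → x ≤ Θ → ρ ≤ Real.cos x := by
    intro x hx0 hxΘ
    rw [hρdef]
    exact Real.cos_le_cos_of_nonneg_of_le_pi hx0
      (by linarith [Real.pi_pos, hΘlt]) hxΘ
  clear_value ρ
  clear hρdef
  set δ : ℝ := min (ε ^ 4 / (9 * M ^ 4)) (ρ / 2) with hδdef
  have hδ0 : 0 < δ := lt_min (by positivity) (by linarith)
  have hδ2 : δ ≤ ρ / 2 := min_le_right _ _
  have hsqδ : Real.sqrt δ ≤ ε ^ 2 / (3 * M ^ 2) := by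
    have hδ1 : δ ≤ ε ^ 4 / (9 * M ^ 4) := min_le_left _ _
    have h1 := Real.sqrt_le_sqrt hδ1
    rw [show ε ^ 4 / (9 * M ^ 4) = (ε ^ 2 / (3 * M ^ 2)) ^ 2 by ring] at h1
    rwa [Real.sqrt_sq (by positivity)] at h1
  clear_value δ
  clear hδdef
  -- the barrier functions
  set θf : ℝ → ℝ := fun x => G x + ε * (x - a) with hθfdef
  have hθeq : ∀ x, θf x = G x + ε * (x - a) := fun x => rfl
  have hθfa : θf a = 0 := by rw [hθeq, hGa]; ring
  have hθ' : ∀ x, HasDerivAt θf (‖D x‖ + ε) x := by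
    intro x
    have h2 : HasDerivAt (fun y => ε * (y - a)) ε x := by
      simpa using ((hasDerivAt_id x).sub_const a).const_mul ε
    rw [hθfdef]
    exact (hGderiv x).add h2
  clear_value θf
  clear hθfdef
  have hB : ∀ x, HasDerivAt (fun y => δ - Real.cos (θf y))
      ((‖D x‖ + ε) * Real.sin (θf x)) x := by
    intro x
    have h1 := ((hθ' x).cos).const_sub δ
    rw [show (‖D x‖ + ε) * Real.sin (θf x) = -(-Real.sin (θf x) * (‖D x‖ + ε)) by ring]
    exact h1
  have hθub : ∀ x ∈ Icc a b, θf x ≤ Θ := by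
    intro x hx
    have h1 : G x ≤ G b := hGmono x hx
    have h2 : ε * (x - a) ≤ ε * (b - a) :=
      mul_le_mul_of_nonneg_left (by linarith [hx.2]) hε0.le
    rw [hθeq, hΘdef]; linarith
  have hθ0 : ∀ x ∈ Icc a b, 0 ≤ θf x := by
    intro x hx
    have h1 := hG0 x hx
    have h2 : 0 ≤ ε * (x - a) := mul_nonneg hε0.le (by linarith [hx.1])
    rw [hθeq]; linarith
  -- the comparison
  have main : ∀ ⦃x⦄, x ∈ Icc a b → -g x ≤ δ - Real.cos (θf x) := by
    apply image_le_of_deriv_right_lt_deriv_boundary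
      (f := fun t => -g t) (f' := fun t => -⟪D t, T a⟫)
      (B := fun y => δ - Real.cos (θf y)) (B' := fun x => (‖D x‖ + ε) * Real.sin (θf x))
    · exact fun t ht => ((hg' t ht).continuousAt.continuousWithinAt).neg
    · exact fun x hx => ((hg' x (Ico_subset_Icc_self hx)).hasDerivWithinAt).neg
    · rw [hga, hθfa, Real.cos_zero]; linarith
    · exact hB
    · -- the crucial bound at contact points
      intro x hx heq
      have hxI : x ∈ Icc a b := Ico_subset_Icc_self hx
      have hθub' : θf x ≤ Θ := hθub x hxI
      have hθlt : θf x < Real.pi / 2 := lt_of_le_of_lt hθub' hΘlt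
      have hθnn : 0 ≤ θf x := hθ0 x hxI
      have hxa : a < x := by
        rcases eq_or_lt_of_le hx.1 with h | h
        · exfalso
          rw [← h, hga, hθfa, Real.cos_zero] at heq
          linarith
        · exact h
      have hθpos : 0 < θf x := by
        have h1 : 0 < ε * (x - a) := mul_pos hε0 (by linarith)
        have h2 := hG0 x hxI
        rw [hθeq]; linarith
      have hgx : g x = Real.cos (θf x) - δ := by linarith [heq]
      -- step A consequences
      have hA := hchord2 x hxI
      have hGθ : G x ^ 2 ≤ θf x ^ 2 := by
        have h1 : G x ≤ θf x := by
          have h2 : 0 ≤ ε * (x - a) := mul_nonneg hε0.le (by linarith)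
          rw [hθeq]; linarith
        nlinarith [hG0 x hxI]
      have hcos_low : 1 - θf x ^ 2 / 2 + δ ≤ Real.cos (θf x) := by
        rw [hgx] at hA; linarith
      -- quartic upper bound for cos
      have hquart : Real.cos (θf x) ≤ 1 - θf x ^ 2 / 2 + θf x ^ 4 / 16 := by
        have hy0 : 0 < θf x / 2 := by linarith
        have hy1 : θf x / 2 ≤ 1 := by
          have := Real.pi_lt_d2
          linarith
        have hsin : θf x / 2 - (θf x / 2) ^ 3 / 4 < Real.sin (θf x / 2) := by
            have := Real.sin_gt_sub_cube hy0; nlinarith [pow_pos hy0 3]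
        have hsinnn : 0 ≤ θf x / 2 - (θf x / 2) ^ 3 / 4 := by nlinarith
        have hsq : (θf x / 2 - (θf x / 2) ^ 3 / 4) ^ 2 ≤ Real.sin (θf x / 2) ^ 2 := by nlinarith
        have hcos2 : Real.cos (θf x) = 1 - 2 * Real.sin (θf x / 2) ^ 2 := by
          have h := Real.cos_two_mul (θf x / 2)
          have h2 := Real.sin_sq_add_cos_sq (θf x / 2)
          have h3 : 2 * (θf x / 2) = θf x := by ring
          rw [h3] at h
          linarith
        rw [hcos2]
        nlinarith [sq_nonneg ((θf x / 2) ^ 3)]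
      have hθ4 : 16 * δ ≤ θf x ^ 4 := by linarith
      have hθsq : 4 * Real.sqrt δ ≤ θf x ^ 2 := by
        have h1 : Real.sqrt (16 * δ) ≤ Real.sqrt (θf x ^ 4) := Real.sqrt_le_sqrt hθ4
        rw [show θf x ^ 4 = (θf x ^ 2) ^ 2 by ring, Real.sqrt_sq (sq_nonneg _)] at h1
        rw [show (16 : ℝ) * δ = 4 ^ 2 * δ by norm_num,
          Real.sqrt_mul (by norm_num : (0:ℝ) ≤ 4 ^ 2) δ,
          Real.sqrt_sq (by norm_num : (0:ℝ) ≤ 4)] at h1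
        linarith
      have hsinlow : θf x / 2 ≤ Real.sin (θf x) := by
        have h1 := Real.mul_le_sin hθnn hθlt.le
        have h2 : (1 : ℝ) / 2 ≤ 2 / Real.pi := by
          rw [div_le_div_iff₀ two_pos Real.pi_pos]
          linarith [Real.pi_lt_d2]
        nlinarith
      have hsinpos : 0 < Real.sin (θf x) :=
        Real.sin_pos_of_pos_of_lt_pi hθpos (by linarith [Real.pi_pos])
      have hsin2 : Real.sqrt δ ≤ Real.sin (θf x) ^ 2 := by nlinarith
      -- assemble the strict inequality
      have hc0 : (0:ℝ) ≤ ‖D x‖ := norm_nonneg _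
      have hcM : ‖D x‖ ≤ M := hMb x hxI
      have hgsq : 1 - g x ^ 2 ≤ Real.sin (θf x) ^ 2 + 2 * δ := by
        rw [hgx]
        have h1 := Real.sin_sq_add_cos_sq (θf x)
        have hcos1 := Real.cos_le_one (θf x)
        nlinarith
      have hstrict : ‖D x‖ * Real.sqrt (Real.sin (θf x) ^ 2 + 2 * δ)
          < (‖D x‖ + ε) * Real.sin (θf x) := by
        have hS0 : (0:ℝ) ≤ Real.sin (θf x) ^ 2 + 2 * δ := by positivity
        have hsd : 0 < Real.sqrt δ := Real.sqrt_pos.2 hδ0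
        have hmulself := Real.mul_self_sqrt hδ0.le
        have h3 : 2 * δ * M ^ 2 < ε ^ 2 * Real.sqrt δ := by
          have h4 : Real.sqrt δ * (3 * M ^ 2) ≤ ε ^ 2 := by
            rw [← le_div_iff₀ (by positivity : (0:ℝ) < 3 * M ^ 2)]
            exact hsqδ
          have h5 := mul_le_mul_of_nonneg_right h4 hsd.le
          have e : Real.sqrt δ * (3 * M ^ 2) * Real.sqrt δ = 3 * M ^ 2 * δ := by
            calc Real.sqrt δ * (3 * M ^ 2) * Real.sqrt δ
                = Real.sqrt δ * Real.sqrt δ * (3 * M ^ 2) := by ring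
              _ = δ * (3 * M ^ 2) := by rw [hmulself]
              _ = 3 * M ^ 2 * δ := by ring
          rw [e] at h5
          nlinarith [mul_pos hδ0 (mul_pos hM0 hM0)]
        have hsq2 : (‖D x‖ * Real.sqrt (Real.sin (θf x) ^ 2 + 2 * δ)) ^ 2
            < ((‖D x‖ + ε) * Real.sin (θf x)) ^ 2 := by
          rw [mul_pow, Real.sq_sqrt hS0, mul_pow]
          have h1 : 2 * δ * ‖D x‖ ^ 2 ≤ 2 * δ * M ^ 2 := by
            nlinarith [mul_le_mul_of_nonneg_left (mul_le_mul hcM hcM hc0 hM0.le)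
              (by positivity : (0:ℝ) ≤ 2 * δ)]
          have h2 : ε ^ 2 * Real.sqrt δ ≤ ε ^ 2 * Real.sin (θf x) ^ 2 := by nlinarith
          nlinarith [mul_nonneg (mul_nonneg hc0 hε0.le) (sq_nonneg (Real.sin (θf x)))]
        have hrhs0 : 0 < (‖D x‖ + ε) * Real.sin (θf x) := mul_pos (by linarith) hsinpos
        exact lt_of_pow_lt_pow_left₀ 2 hrhs0.le hsq2
      have habs := hg'bd x hxI
      have hmono2 : Real.sqrt (1 - g x ^ 2) ≤ Real.sqrt (Real.sin (θf x) ^ 2 + 2 * δ) :=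
        Real.sqrt_le_sqrt hgsq
      calc -⟪D x, T a⟫ ≤ |⟪D x, T a⟫| := neg_le_abs _
        _ ≤ ‖D x‖ * Real.sqrt (1 - g x ^ 2) := habs
        _ ≤ ‖D x‖ * Real.sqrt (Real.sin (θf x) ^ 2 + 2 * δ) :=
            mul_le_mul_of_nonneg_left hmono2 hc0
        _ < (‖D x‖ + ε) * Real.sin (θf x) := hstrict
  -- conclude
  intro t ht
  have h1 := main ht
  have hcosρ : ρ ≤ Real.cos (θf t) := hρcos (θf t) (hθ0 t ht) (hθub t ht)
  have hgt : 0 < g t := by linarith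
  rw [hgdef] at hgt
  exact hgt

set_option maxHeartbeats 1000000 in
/-- Let `γ : [0,1] → ℝ³` be a `C²` regular simple curve, `t₀ ∈ (0,1)`, and let
`Π(t₀)` be the plane through `γ(t₀)` normal to `γ'(t₀)`.  If `u ∈ (0,t₀)`, `v ∈ (t₀,1)` and the
total curvatures of `γ` over `[u,t₀]` and over `[t₀,v]` are each `< π/2`, then the two sub-arcs
meet `Π(t₀)` only at `γ(t₀)` and lie (strictly) on opposite sides of `Π(t₀)`. -/
theorem subarcs_separated_by_normal_plane
    (γ γ' γ'' : ℝ → EuclideanSpace ℝ (Fin 3))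
    (hd1 : ∀ t ∈ Icc (0 : ℝ) 1, HasDerivAt γ (γ' t) t)
    (hd2 : ∀ t ∈ Icc (0 : ℝ) 1, HasDerivAt γ' (γ'' t) t)
    (hcont : ContinuousOn γ'' (Icc (0 : ℝ) 1))
    (hreg : ∀ t ∈ Icc (0 : ℝ) 1, γ' t ≠ 0)
    (hsimple : Set.InjOn γ (Icc (0 : ℝ) 1))
    (t₀ : ℝ) (ht₀ : t₀ ∈ Ioo (0 : ℝ) 1)
    (u v : ℝ) (hu : u ∈ Ioo (0 : ℝ) t₀) (hv : v ∈ Ioo t₀ 1)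
    (htc₁ : arcTotalCurvature γ' γ'' u t₀ < Real.pi / 2)
    (htc₂ : arcTotalCurvature γ' γ'' t₀ v < Real.pi / 2) :
    (∀ t ∈ Icc u t₀, t ≠ t₀ → (inner ℝ (γ t - γ t₀) (γ' t₀) : ℝ) < 0) ∧
    (∀ t ∈ Icc t₀ v, t ≠ t₀ → 0 < (inner ℝ (γ t - γ t₀) (γ' t₀) : ℝ)) := by
  obtain ⟨ht₀0, ht₀1⟩ := ht₀
  obtain ⟨hu0, hut⟩ := hu
  obtain ⟨htv, hv1⟩ := hv
  have hsub : Icc u v ⊆ Icc (0 : ℝ) 1 := Icc_subset_Icc (by linarith) (by linarith)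
  have hsub10 : Icc u t₀ ⊆ Icc (0 : ℝ) 1 := Icc_subset_Icc (by linarith) (by linarith)
  have hsub20 : Icc t₀ v ⊆ Icc (0 : ℝ) 1 := Icc_subset_Icc (by linarith) (by linarith)
  have ht₀I : t₀ ∈ Icc (0 : ℝ) 1 := ⟨ht₀0.le, ht₀1.le⟩
  -- the unit tangent and its derivative
  set T : ℝ → EuclideanSpace ℝ (Fin 3) := fun t => ‖γ' t‖⁻¹ • γ' t with hTdef
  set D : ℝ → EuclideanSpace ℝ (Fin 3) :=
    fun t => ‖γ' t‖⁻¹ • γ'' t - (⟪γ' t, γ'' t⟫ / ‖γ' t‖ ^ 3) • γ' t with hDdef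
  have hrpos : ∀ t ∈ Icc (0 : ℝ) 1, 0 < ‖γ' t‖ := fun t ht => norm_pos_iff.2 (hreg t ht)
  have hTd : ∀ t ∈ Icc (0 : ℝ) 1, HasDerivAt T (D t) t := fun t ht =>
    tangent_deriv (hd2 t ht) (hreg t ht)
  have hTunit : ∀ t ∈ Icc (0 : ℝ) 1, ‖T t‖ = 1 := by
    intro t ht
    rw [hTdef]
    simp only [norm_smul, Real.norm_eq_abs, abs_of_nonneg (inv_nonneg.2 (norm_nonneg (γ' t)))]
    exact inv_mul_cancel₀ (hrpos t ht).ne'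
  have hDnorm : ∀ t ∈ Icc (0 : ℝ) 1, ‖D t‖ = ‖cross3 (γ' t) (γ'' t)‖ / ‖γ' t‖ ^ 2 :=
    fun t ht => D_norm_eq (hreg t ht)
  have hγ'cont : ContinuousOn γ' (Icc (0 : ℝ) 1) := fun t ht =>
    (hd2 t ht).continuousAt.continuousWithinAt
  have hDcont : ContinuousOn D (Icc (0 : ℝ) 1) := by
    rw [hDdef]
    apply ContinuousOn.sub
    · exact (hγ'cont.norm.inv₀ fun t ht => (hrpos t ht).ne').smul hcont
    · exact (ContinuousOn.div (hγ'cont.inner hcont) (hγ'cont.norm.pow 3)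
        fun t ht => pow_ne_zero 3 (hrpos t ht).ne').smul hγ'cont
  have hTinner : ∀ s ∈ Icc (0 : ℝ) 1, ∀ t ∈ Icc (0 : ℝ) 1,
      ⟪γ' s, γ' t⟫ = ‖γ' s‖ * ‖γ' t‖ * ⟪T s, T t⟫ := by
    intro s hs t ht
    have h1 : ‖γ' s‖ ≠ 0 := (hrpos s hs).ne'
    have h2 : ‖γ' t‖ ≠ 0 := (hrpos t ht).ne'
    rw [hTdef]
    simp only [real_inner_smul_left, real_inner_smul_right]
    field_simp
  clear_value T D
  clear hTdef hDdef
  -- right sub-arc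
  have hright : ∀ t ∈ Icc t₀ v, 0 < ⟪T t, T t₀⟫ := by
    have hcl : ∀ t : ℝ, max t₀ (min t v) ∈ Icc t₀ v := fun t =>
      ⟨le_max_left _ _, max_le (by linarith) (min_le_right _ _)⟩
    have hclid : ∀ t ∈ Icc t₀ v, max t₀ (min t v) = t := fun t ht => by
      rw [min_eq_left ht.2, max_eq_right ht.1]
    have hD2cont : Continuous fun t => D (max t₀ (min t v)) := by
      have hc : Continuous fun t : ℝ => max t₀ (min t v) :=
        continuous_const.max (continuous_id.min continuous_const)
      exact (hDcont.mono hsub20).comp_continuous hc hcl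
    have hT2 : ∀ t ∈ Icc t₀ v, HasDerivAt T (D (max t₀ (min t v))) t := by
      intro t ht; rw [hclid t ht]; exact hTd t (hsub20 ht)
    have hint : (∫ t in t₀..v, ‖D (max t₀ (min t v))‖) < Real.pi / 2 := by
      have heq : (∫ t in t₀..v, ‖D (max t₀ (min t v))‖)
          = ∫ t in t₀..v, ‖cross3 (γ' t) (γ'' t)‖ / ‖γ' t‖ ^ 2 := by
        apply intervalIntegral.integral_congr
        intro t ht
        rw [uIcc_of_le htv.le] at ht
        dsimp only
        rw [hclid t ht, hDnorm t (hsub20 ht)]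
      rw [heq]
      exact htc₂
    exact key_tangent T (fun t => D (max t₀ (min t v))) t₀ v htv hT2 hD2cont
      (fun t ht => hTunit t (hsub20 ht)) hint
  -- left sub-arc (run backwards)
  have hleft : ∀ s ∈ Icc u t₀, 0 < ⟪T s, T t₀⟫ := by
    have hcl : ∀ t : ℝ, max u (min t t₀) ∈ Icc u t₀ := fun t =>
      ⟨le_max_left _ _, max_le (by linarith) (min_le_right _ _)⟩
    have hclid : ∀ t ∈ Icc u t₀, max u (min t t₀) = t := fun t ht => by
      rw [min_eq_left ht.2, max_eq_right ht.1]
    have hD1cont : Continuous fun t : ℝ => -D (max u (min (u + t₀ - t) t₀)) := by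
      have hc : Continuous fun t : ℝ => max u (min (u + t₀ - t) t₀) :=
        continuous_const.max ((continuous_const.sub continuous_id).min continuous_const)
      exact (((hDcont.mono hsub10).comp_continuous hc fun t => hcl _)).neg
    have hS : ∀ t ∈ Icc u t₀,
        HasDerivAt (fun s => T (u + t₀ - s)) (-D (max u (min (u + t₀ - t) t₀))) t := by
      intro t ht
      have hmem : u + t₀ - t ∈ Icc u t₀ := ⟨by linarith [ht.2], by linarith [ht.1]⟩
      have h1 : HasDerivAt T (D (u + t₀ - t)) (u + t₀ - t) := hTd _ (hsub10 hmem)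
      have h2 : HasDerivAt (fun s : ℝ => u + t₀ - s) (-1 : ℝ) t := by
        simpa using (hasDerivAt_id t).const_sub (u + t₀)
      have h3 := HasDerivAt.scomp_of_eq (x := t) (hg := h1) (hh := h2) (hy := rfl)
      rw [hclid _ hmem]
      simpa [Function.comp_def] using h3
    have hSunit : ∀ t ∈ Icc u t₀, ‖T (u + t₀ - t)‖ = 1 := by
      intro t ht
      have hmem : u + t₀ - t ∈ Icc u t₀ := ⟨by linarith [ht.2], by linarith [ht.1]⟩
      exact hTunit _ (hsub10 hmem)
    have hint : (∫ t in u..t₀, ‖-D (max u (min (u + t₀ - t) t₀))‖) < Real.pi / 2 := by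
      have heq0 : (∫ t in u..t₀, ‖-D (max u (min (u + t₀ - t) t₀))‖)
          = ∫ t in u..t₀, ‖D (max u (min (u + t₀ - t) t₀))‖ := by
        apply intervalIntegral.integral_congr
        intro t _
        simp only [norm_neg]
      have heq1 : (∫ t in u..t₀, ‖D (max u (min (u + t₀ - t) t₀))‖)
          = ∫ t in u..t₀, ‖D (max u (min t t₀))‖ := by
        have h1 := intervalIntegral.integral_comp_sub_left
          (a := u) (b := t₀) (fun s => ‖D (max u (min s t₀))‖) (u + t₀)
        rw [show u + t₀ - t₀ = u by ring, show u + t₀ - u = t₀ by ring] at h1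
        exact h1
      have heq2 : (∫ t in u..t₀, ‖D (max u (min t t₀))‖)
          = ∫ t in u..t₀, ‖cross3 (γ' t) (γ'' t)‖ / ‖γ' t‖ ^ 2 := by
        apply intervalIntegral.integral_congr
        intro t ht
        rw [uIcc_of_le hut.le] at ht
        dsimp only
        rw [hclid t ht, hDnorm t (hsub10 ht)]
      rw [heq0, heq1, heq2]
      exact htc₁
    have key1 := key_tangent (fun s => T (u + t₀ - s))
      (fun t => -D (max u (min (u + t₀ - t) t₀))) u t₀ hut hS hD1cont hSunit hint
    intro s hs
    have hmem : u + t₀ - s ∈ Icc u t₀ := ⟨by linarith [hs.2], by linarith [hs.1]⟩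
    have h1 : 0 < ⟪T (u + t₀ - (u + t₀ - s)), T (u + t₀ - u)⟫ := key1 (u + t₀ - s) hmem
    rw [show u + t₀ - (u + t₀ - s) = s by ring, show u + t₀ - u = t₀ by ring] at h1
    exact h1
  -- positivity of ⟪γ' s, γ' t₀⟫ on [u, v]
  have hγ'pos : ∀ s ∈ Icc u v, 0 < ⟪γ' s, γ' t₀⟫ := by
    intro s hs
    have hsI : s ∈ Icc (0 : ℝ) 1 := hsub hs
    have hTpos : 0 < ⟪T s, T t₀⟫ := by
      rcases le_total s t₀ with h | h
      · exact hleft s ⟨hs.1, h⟩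
      · exact hright s ⟨h, hs.2⟩
    rw [hTinner s hsI t₀ ht₀I]
    exact mul_pos (mul_pos (hrpos s hsI) (hrpos t₀ ht₀I)) hTpos
  -- the height function along the normal direction
  have hφ' : ∀ t ∈ Icc (0 : ℝ) 1,
      HasDerivAt (fun t => ⟪γ t - γ t₀, γ' t₀⟫) ⟪γ' t, γ' t₀⟫ t := by
    intro t ht
    have h1 := ((hd1 t ht).sub_const (γ t₀)).inner ℝ (hasDerivAt_const t (γ' t₀))
    simpa using h1
  have hmono : StrictMonoOn (fun t => ⟪γ t - γ t₀, γ' t₀⟫) (Icc u v) := by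
    apply strictMonoOn_of_deriv_pos (convex_Icc u v)
    · exact fun t ht => (hφ' t (hsub ht)).continuousAt.continuousWithinAt
    · intro x hx
      rw [interior_Icc] at hx
      rw [(hφ' x (hsub (Ioo_subset_Icc_self hx))).deriv]
      exact hγ'pos x (Ioo_subset_Icc_self hx)
  have hφt₀ : ⟪γ t₀ - γ t₀, γ' t₀⟫ = (0 : ℝ) := by simp
  have ht₀uv : t₀ ∈ Icc u v := ⟨hut.le, htv.le⟩
  constructor
  · intro t ht hne
    have h1 : t < t₀ := lt_of_le_of_ne ht.2 hne
    have h2 := hmono (⟨ht.1, by linarith [ht.2]⟩ : t ∈ Icc u v) ht₀uv h1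
    dsimp only at h2
    rw [hφt₀] at h2
    exact h2
  · intro t ht hne
    have h1 : t₀ < t := lt_of_le_of_ne ht.1 (Ne.symm hne)
    have h2 := hmono ht₀uv (⟨by linarith [ht.1], ht.2⟩ : t ∈ Icc u v) h1
    dsimp only at h2
    rw [hφt₀] at h2
    exact h2
end

section
/- Let L be a PL curve in ℝ³ and let a vertex B of a triangle ABC (with A, B, C consecutive vertices of L) be moved along the median from B toward the midpoint M of AC, i.e., replaced by B(s) = (1−s)B + sM for s ∈ [0,1]. Then the total curvature of the resulting PL curve is a monotone non-increasing function of s; in particular, at each intermediate time it does not exceed the total curvature of the original curve. -/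
open Filter Set

section Aux

open Real InnerProductGeometry
open scoped RealInnerProductSpace

variable {V : Type*} [NormedAddCommGroup V] [InnerProductSpace ℝ V]

lemma my_inner_self_pos {y : V} (hy : y ≠ 0) : (0:ℝ) < ⟪y,y⟫ := by
  rw [real_inner_self_eq_norm_sq]
  exact pow_pos (norm_pos_iff.2 hy) 2

/-- Key inner-product inequality behind the spherical triangle inequality. -/
lemma key_inner_ineq (x y z : V) :
    ⟪x,y⟫ * ⟪y,z⟫ - √(⟪x,x⟫*⟪y,y⟫ - ⟪x,y⟫*⟪x,y⟫) * √(⟪y,y⟫*⟪z,z⟫ - ⟪y,z⟫*⟪y,z⟫)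
      ≤ ⟪x,z⟫ * ⟪y,y⟫ := by
  rcases eq_or_ne y 0 with rfl | hy
  · simp
  have hy2 : (0:ℝ) < ⟪y,y⟫ := my_inner_self_pos hy
  set x' : V := ⟪y,y⟫ • x - ⟪x,y⟫ • y with hx'
  set z' : V := ⟪y,y⟫ • z - ⟪y,z⟫ • y with hz'
  have hxz' : ⟪x',z'⟫ = ⟪y,y⟫ * (⟪y,y⟫ * ⟪x,z⟫ - ⟪x,y⟫ * ⟪y,z⟫) := by
    simp only [hx', hz', inner_sub_left, inner_sub_right, real_inner_smul_left,
      real_inner_smul_right, real_inner_comm y x, real_inner_comm z y]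
    ring
  have hxx' : ⟪x',x'⟫ = ⟪y,y⟫ * (⟪x,x⟫*⟪y,y⟫ - ⟪x,y⟫*⟪x,y⟫) := by
    simp only [hx', inner_sub_left, inner_sub_right, real_inner_smul_left,
      real_inner_smul_right, real_inner_comm y x]
    ring
  have hzz' : ⟪z',z'⟫ = ⟪y,y⟫ * (⟪y,y⟫*⟪z,z⟫ - ⟪y,z⟫*⟪y,z⟫) := by
    simp only [hz', inner_sub_left, inner_sub_right, real_inner_smul_left,
      real_inner_smul_right, real_inner_comm z y]
    ring
  have hCS : -(‖x'‖ * ‖z'‖) ≤ ⟪x',z'⟫ := neg_le_of_abs_le (abs_real_inner_le_norm x' z')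
  have hnx' : ‖x'‖ = √⟪y,y⟫ * √(⟪x,x⟫*⟪y,y⟫ - ⟪x,y⟫*⟪x,y⟫) := by
    rw [← Real.sqrt_mul hy2.le, ← hxx', real_inner_self_eq_norm_mul_norm,
      Real.sqrt_mul_self (norm_nonneg _)]
  have hnz' : ‖z'‖ = √⟪y,y⟫ * √(⟪y,y⟫*⟪z,z⟫ - ⟪y,z⟫*⟪y,z⟫) := by
    rw [← Real.sqrt_mul hy2.le, ← hzz', real_inner_self_eq_norm_mul_norm,
      Real.sqrt_mul_self (norm_nonneg _)]
  rw [hnx', hnz', hxz'] at hCS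
  have hsq : √⟪y,y⟫ * √⟪y,y⟫ = ⟪y,y⟫ := Real.mul_self_sqrt hy2.le
  rw [show √⟪y,y⟫ * √(⟪x,x⟫*⟪y,y⟫ - ⟪x,y⟫*⟪x,y⟫) *
      (√⟪y,y⟫ * √(⟪y,y⟫*⟪z,z⟫ - ⟪y,z⟫*⟪y,z⟫)) =
      √⟪y,y⟫ * √⟪y,y⟫ * (√(⟪x,x⟫*⟪y,y⟫ - ⟪x,y⟫*⟪x,y⟫) * √(⟪y,y⟫*⟪z,z⟫ - ⟪y,z⟫*⟪y,z⟫))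
      from by ring, hsq] at hCS
  have h2 : ⟪y,y⟫ * (⟪x,y⟫ * ⟪y,z⟫ -
      √(⟪x,x⟫*⟪y,y⟫ - ⟪x,y⟫*⟪x,y⟫) * √(⟪y,y⟫*⟪z,z⟫ - ⟪y,z⟫*⟪y,z⟫)) ≤
      ⟪y,y⟫ * (⟪x,z⟫ * ⟪y,y⟫) := by nlinarith [hCS]
  exact le_of_mul_le_mul_left h2 hy2

/-- Spherical triangle inequality for unoriented vector angles. -/
theorem angle_triangle' (x y z : V) : angle x z ≤ angle x y + angle y z := by
  rcases eq_or_ne x 0 with rfl | hx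
  · simpa using angle_nonneg y z
  rcases eq_or_ne z 0 with rfl | hz
  · have := angle_nonneg x y; simp; linarith
  rcases eq_or_ne y 0 with rfl | hy
  · simpa using angle_le_pi x z
  by_cases hpi : π ≤ angle x y + angle y z
  · exact le_trans (angle_le_pi x z) hpi
  push_neg at hpi
  have h0 : (0:ℝ) ≤ angle x y + angle y z := add_nonneg (angle_nonneg _ _) (angle_nonneg _ _)
  have hxn : (0:ℝ) < ‖x‖ := norm_pos_iff.2 hx
  have hyn : (0:ℝ) < ‖y‖ := norm_pos_iff.2 hy
  have hzn : (0:ℝ) < ‖z‖ := norm_pos_iff.2 hz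
  have e1 := cos_angle_mul_norm_mul_norm x y
  have e2 := cos_angle_mul_norm_mul_norm y z
  have e3 := cos_angle_mul_norm_mul_norm x z
  have s1 := sin_angle_mul_norm_mul_norm x y
  have s2 := sin_angle_mul_norm_mul_norm y z
  have hyy : ⟪y,y⟫ = ‖y‖ * ‖y‖ := real_inner_self_eq_norm_mul_norm y
  have hcos : Real.cos (angle x y + angle y z) * ((‖x‖ * ‖z‖) * (‖y‖ * ‖y‖)) ≤
      Real.cos (angle x z) * ((‖x‖ * ‖z‖) * (‖y‖ * ‖y‖)) := by
    rw [Real.cos_add]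
    calc (Real.cos (angle x y) * Real.cos (angle y z) -
            Real.sin (angle x y) * Real.sin (angle y z)) * ((‖x‖ * ‖z‖) * (‖y‖ * ‖y‖))
        = (Real.cos (angle x y) * (‖x‖ * ‖y‖)) * (Real.cos (angle y z) * (‖y‖ * ‖z‖))
          - (Real.sin (angle x y) * (‖x‖ * ‖y‖)) * (Real.sin (angle y z) * (‖y‖ * ‖z‖)) := by
          ring
      _ = ⟪x,y⟫ * ⟪y,z⟫ -
          √(⟪x,x⟫*⟪y,y⟫ - ⟪x,y⟫*⟪x,y⟫) * √(⟪y,y⟫*⟪z,z⟫ - ⟪y,z⟫*⟪y,z⟫) := by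
          rw [e1, e2, s1, s2]
      _ ≤ ⟪x,z⟫ * ⟪y,y⟫ := key_inner_ineq x y z
      _ = Real.cos (angle x z) * ((‖x‖ * ‖z‖) * (‖y‖ * ‖y‖)) := by rw [← e3, hyy]; ring
  have hcos' : Real.cos (angle x y + angle y z) ≤ Real.cos (angle x z) :=
    (mul_le_mul_iff_of_pos_right (by positivity)).1 hcos
  by_contra hcon
  push_neg at hcon
  have := Real.strictAntiOn_cos ⟨h0, hpi.le⟩ ⟨angle_nonneg x z, angle_le_pi x z⟩ hcon
  linarith

/-- Additivity of angles at a nonnegative combination. -/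
theorem angle_add_combo {u v : V} (hG : ⟪u,v⟫*⟪u,v⟫ < ⟪u,u⟫*⟪v,v⟫) {c d : ℝ}
    (hc : 0 ≤ c) (hd : 0 ≤ d) (hw : c•u + d•v ≠ 0) :
    angle u (c•u+d•v) + angle (c•u+d•v) v = angle u v := by
  have hu : u ≠ 0 := by rintro rfl; simp at hG
  have hv : v ≠ 0 := by rintro rfl; simp at hG
  set w : V := c•u + d•v with hwdef
  set G : ℝ := ⟪u,u⟫*⟪v,v⟫ - ⟪u,v⟫*⟪u,v⟫ with hGdef
  have hGpos : 0 < G := by rw [hGdef]; linarith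
  have hWpos : (0:ℝ) < ⟪w,w⟫ := my_inner_self_pos hw
  have hUV : (0:ℝ) < ‖u‖ * ‖v‖ := mul_pos (norm_pos_iff.2 hu) (norm_pos_iff.2 hv)
  have hiuw : ⟪u,w⟫ = c*⟪u,u⟫ + d*⟪u,v⟫ := by
    simp [hwdef, inner_add_right, real_inner_smul_right]
  have hiwv : ⟪w,v⟫ = c*⟪u,v⟫ + d*⟪v,v⟫ := by
    simp [hwdef, inner_add_left, real_inner_smul_left, real_inner_comm v u]
  have hW2 : ⟪w,w⟫ = c*c*⟪u,u⟫ + 2*(c*d)*⟪u,v⟫ + d*d*⟪v,v⟫ := by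
    simp only [hwdef, inner_add_left, inner_add_right, real_inner_smul_left,
      real_inner_smul_right, real_inner_comm v u]
    ring
  have hsqG : √G * √G = G := Real.mul_self_sqrt hGpos.le
  have e1 := cos_angle_mul_norm_mul_norm u w
  have e2 := cos_angle_mul_norm_mul_norm w v
  have e3 := cos_angle_mul_norm_mul_norm u v
  have s3 : Real.sin (angle u v) * (‖u‖ * ‖v‖) = √G := by
    rw [sin_angle_mul_norm_mul_norm, hGdef]
  have s1 : Real.sin (angle u w) * (‖u‖ * ‖w‖) = d * √G := by
    rw [sin_angle_mul_norm_mul_norm,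
      show ⟪u,u⟫*⟪w,w⟫ - ⟪u,w⟫*⟪u,w⟫ = d^2*G from by rw [hiuw, hW2, hGdef]; ring,
      Real.sqrt_mul (sq_nonneg d), Real.sqrt_sq hd]
  have s2 : Real.sin (angle w v) * (‖w‖ * ‖v‖) = c * √G := by
    rw [sin_angle_mul_norm_mul_norm,
      show ⟪w,w⟫*⟪v,v⟫ - ⟪w,v⟫*⟪w,v⟫ = c^2*G from by rw [hiwv, hW2, hGdef]; ring,
      Real.sqrt_mul (sq_nonneg c), Real.sqrt_sq hc]
  have hww' : (‖u‖*‖w‖)*(‖w‖*‖v‖) = (‖u‖*‖v‖)*⟪w,w⟫ := by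
    rw [real_inner_self_eq_norm_mul_norm]; ring
  have hcos : Real.cos (angle u w + angle w v) * ((‖u‖*‖v‖)*⟪w,w⟫)
      = Real.cos (angle u v) * ((‖u‖*‖v‖)*⟪w,w⟫) := by
    rw [← hww', Real.cos_add]
    calc (Real.cos (angle u w) * Real.cos (angle w v) -
            Real.sin (angle u w) * Real.sin (angle w v)) * ((‖u‖*‖w‖)*(‖w‖*‖v‖))
        = (Real.cos (angle u w) * (‖u‖*‖w‖)) * (Real.cos (angle w v) * (‖w‖*‖v‖))
          - (Real.sin (angle u w) * (‖u‖*‖w‖)) * (Real.sin (angle w v) * (‖w‖*‖v‖)) := by ring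
      _ = ⟪u,w⟫*⟪w,v⟫ - (d*√G)*(c*√G) := by rw [e1, e2, s1, s2]
      _ = ⟪u,v⟫ * ⟪w,w⟫ := by
          rw [show (d*√G)*(c*√G) = c*d*(√G*√G) from by ring, hsqG, hiuw, hiwv, hW2, hGdef]
          ring
      _ = Real.cos (angle u v) * ((‖u‖*‖w‖)*(‖w‖*‖v‖)) := by rw [hww', ← e3]; ring
  have hcos' : Real.cos (angle u w + angle w v) = Real.cos (angle u v) :=
    mul_right_cancel₀ (by positivity) hcos
  have hsin : Real.sin (angle u w + angle w v) * ((‖u‖*‖v‖)*⟪w,w⟫) = √G * ⟪w,w⟫ := by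
    rw [← hww', Real.sin_add]
    calc (Real.sin (angle u w) * Real.cos (angle w v) +
            Real.cos (angle u w) * Real.sin (angle w v)) * ((‖u‖*‖w‖)*(‖w‖*‖v‖))
        = (Real.sin (angle u w) * (‖u‖*‖w‖)) * (Real.cos (angle w v) * (‖w‖*‖v‖))
          + (Real.cos (angle u w) * (‖u‖*‖w‖)) * (Real.sin (angle w v) * (‖w‖*‖v‖)) := by ring
      _ = (d*√G)*⟪w,v⟫ + ⟪u,w⟫*(c*√G) := by rw [e1, e2, s1, s2]
      _ = √G * ⟪w,w⟫ := by rw [hiuw, hiwv, hW2]; ring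
  have hsinpos : 0 < Real.sin (angle u w + angle w v) := by
    have hG' : (0:ℝ) < √G := Real.sqrt_pos.2 hGpos
    nlinarith [hsin, mul_pos hUV hWpos, mul_pos hG' hWpos]
  have hABle : angle u w + angle w v < π := by
    by_contra hcon
    push_neg at hcon
    have h2π : angle u w + angle w v - π ≤ π := by
      have := angle_le_pi u w; have := angle_le_pi w v; linarith
    have := Real.sin_nonneg_of_nonneg_of_le_pi (by linarith : 0 ≤ angle u w + angle w v - π) h2π
    rw [Real.sin_sub_pi] at this
    linarith
  exact Real.injOn_cos
    ⟨add_nonneg (angle_nonneg _ _) (angle_nonneg _ _), hABle.le⟩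
    ⟨angle_nonneg _ _, angle_le_pi _ _⟩ hcos'

/-- Master inequality for a single median push. -/
theorem push_ineq {u v : V} (hG : ⟪u,v⟫*⟪u,v⟫ < ⟪u,u⟫*⟪v,v⟫) {a : ℝ}
    (ha : 0 ≤ a) (ha' : a ≤ 1/2) (e f : V) :
    angle e ((1-a)•u + a•v) + angle ((1-a)•u + a•v) (a•u + (1-a)•v)
      + angle (a•u + (1-a)•v) f
      ≤ angle e u + angle u v + angle v f := by
  have ha1 : (0:ℝ) < 1 - a := by linarith
  set w1 : V := (1-a)•u + a•v with hw1def
  set w2 : V := a•u + (1-a)•v with hw2def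
  have hGv : (0:ℝ) < ⟪u,u⟫*⟪v,v⟫ - ⟪u,v⟫*⟪u,v⟫ := by linarith
  have hGw2 : ⟪u,u⟫*⟪w2,w2⟫ - ⟪u,w2⟫*⟪u,w2⟫
      = (1-a)*(1-a)*(⟪u,u⟫*⟪v,v⟫ - ⟪u,v⟫*⟪u,v⟫) := by
    simp only [hw2def, inner_add_left, inner_add_right, real_inner_smul_left,
      real_inner_smul_right, real_inner_comm v u]
    ring
  have hGw1 : ⟪w1,w1⟫*⟪v,v⟫ - ⟪w1,v⟫*⟪w1,v⟫
      = (1-a)*(1-a)*(⟪u,u⟫*⟪v,v⟫ - ⟪u,v⟫*⟪u,v⟫) := by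
    simp only [hw1def, inner_add_left, inner_add_right, real_inner_smul_left,
      real_inner_smul_right, real_inner_comm v u]
    ring
  have hw2ne : w2 ≠ 0 := by
    intro h
    rw [h] at hGw2
    simp only [inner_zero_left, inner_zero_right] at hGw2
    nlinarith [mul_pos (mul_pos ha1 ha1) hGv]
  have hw1ne : w1 ≠ 0 := by
    intro h
    rw [h] at hGw1
    simp only [inner_zero_left, inner_zero_right] at hGw1
    nlinarith [mul_pos (mul_pos ha1 ha1) hGv]
  have h1 : angle u w2 + angle w2 v = angle u v :=
    angle_add_combo hG ha (by linarith) hw2ne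
  have hGuw2 : ⟪u,w2⟫*⟪u,w2⟫ < ⟪u,u⟫*⟪w2,w2⟫ := by nlinarith [mul_pos (mul_pos ha1 ha1) hGv]
  have hcombo : ((1-2*a)/(1-a))•u + (a/(1-a))•w2 = w1 := by
    rw [hw2def, hw1def]
    match_scalars
    · field_simp
      ring
    · field_simp
  have h2 : angle u w1 + angle w1 w2 = angle u w2 := by
    have := angle_add_combo hGuw2 (c := (1-2*a)/(1-a)) (d := a/(1-a))
      (div_nonneg (by linarith) (by linarith)) (div_nonneg ha (by linarith)) (by rw [hcombo]; exact hw1ne)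
    rwa [hcombo] at this
  have tri1 : angle e w1 ≤ angle e u + angle u w1 := angle_triangle' e u w1
  have tri2 : angle w2 f ≤ angle w2 v + angle v f := angle_triangle' w2 v f
  linarith

theorem push_step (n k : ℕ) (hk : 1 ≤ k) (hkn : k + 1 ≤ n)
    (P : ℕ → EuclideanSpace ℝ (Fin 3)) (B1 B2 : EuclideanSpace ℝ (Fin 3)) (σ : ℝ)
    (hσ0 : 0 ≤ σ) (hσ1 : σ ≤ 1)
    (hB2 : B2 = B1 + σ • (midpoint ℝ (P (k-1)) (P (k+1)) - B1))
    (hG : ⟪B1 - P (k-1), P (k+1) - B1⟫ * ⟪B1 - P (k-1), P (k+1) - B1⟫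
        < ⟪B1 - P (k-1), B1 - P (k-1)⟫ * ⟪P (k+1) - B1, P (k+1) - B1⟫) :
    plTotalCurvature n (Function.update P k B2) ≤ plTotalCurvature n (Function.update P k B1) := by
  set u : EuclideanSpace ℝ (Fin 3) := B1 - P (k-1) with hu_def
  set v : EuclideanSpace ℝ (Fin 3) := P (k+1) - B1 with hv_def
  have hu : u ≠ 0 := by intro h; rw [h] at hG; simp at hG
  have hv : v ≠ 0 := by intro h; rw [h] at hG; simp at hG
  set a : ℝ := σ / 2 with ha_def
  have ha : 0 ≤ a := by positivity
  have ha' : a ≤ 1/2 := by rw [ha_def]; linarith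
  have hw1 : B2 - P (k-1) = (1-a)•u + a•v := by
    rw [hB2, midpoint_eq_smul_add, invOf_eq_inv, hu_def, hv_def, ha_def]
    match_scalars <;> ring
  have hw2 : P (k+1) - B2 = a•u + (1-a)•v := by
    rw [hB2, midpoint_eq_smul_add, invOf_eq_inv, hu_def, hv_def, ha_def]
    match_scalars <;> ring
  -- update evaluations
  have U0 : ∀ j, j ≠ k → ∀ B : EuclideanSpace ℝ (Fin 3), Function.update P k B j = P j :=
    fun j hj B => Function.update_of_ne hj _ _
  have U1 : ∀ B : EuclideanSpace ℝ (Fin 3), Function.update P k B k = B :=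
    fun B => Function.update_self _ _ _
  rw [plTotalCurvature, plTotalCurvature, ← sub_nonneg, ← Finset.sum_sub_distrib]
  set D : ℕ → ℝ := fun j =>
    angle (Function.update P k B1 (j+1) - Function.update P k B1 j)
        (Function.update P k B1 (j+2) - Function.update P k B1 (j+1)) -
      angle (Function.update P k B2 (j+1) - Function.update P k B2 j)
        (Function.update P k B2 (j+2) - Function.update P k B2 (j+1)) with hD_def
  show 0 ≤ ∑ j ∈ Finset.range (n-1), D j
  have hsub : Finset.range (n-1) ∩ Finset.Icc (k-2) k ⊆ Finset.range (n-1) :=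
    Finset.inter_subset_left
  have hzero : ∀ j ∈ Finset.range (n-1), j ∉ Finset.range (n-1) ∩ Finset.Icc (k-2) k →
      D j = 0 := by
    intro j hj hjn
    have hj' : ¬ (k - 2 ≤ j ∧ j ≤ k) := by
      intro h
      exact hjn (Finset.mem_inter.2 ⟨hj, Finset.mem_Icc.2 h⟩)
    have h1 : j ≠ k := by omega
    have h2 : j + 1 ≠ k := by omega
    have h3 : j + 2 ≠ k := by omega
    simp only [hD_def, U0 _ h1, U0 _ h2, U0 _ h3, sub_self]
  rw [← Finset.sum_subset hsub hzero]
  -- now split into cases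
  have hD1 : D (k-1) = angle u v - angle ((1-a)•u + a•v) (a•u + (1-a)•v) := by
    have i1 : k - 1 + 1 = k := by omega
    have i2 : k - 1 + 2 = k + 1 := by omega
    simp only [hD_def]
    rw [i1, i2, U1 B1, U1 B2, U0 (k-1) (by omega) B1, U0 (k-1) (by omega) B2,
      U0 (k+1) (by omega) B1, U0 (k+1) (by omega) B2, hw1, hw2]
  by_cases h2k : 2 ≤ k
  · have hDe : D (k-2) = angle (P (k-1) - P (k-2)) u - angle (P (k-1) - P (k-2)) ((1-a)•u + a•v) := by
      have i1 : k - 2 + 1 = k - 1 := by omega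
      have i2 : k - 2 + 2 = k := by omega
      simp only [hD_def]
      rw [i1, i2, U1 B1, U1 B2, U0 (k-2) (by omega) B1, U0 (k-2) (by omega) B2,
        U0 (k-1) (by omega) B1, U0 (k-1) (by omega) B2, hw1]
    by_cases hkn2 : k + 2 ≤ n
    · have hS : Finset.range (n-1) ∩ Finset.Icc (k-2) k = {k-2, k-1, k} := by
        ext j
        simp only [Finset.mem_inter, Finset.mem_range, Finset.mem_Icc, Finset.mem_insert,
          Finset.mem_singleton]
        omega
      have hDf : D k = angle v (P (k+2) - P (k+1)) - angle (a•u + (1-a)•v) (P (k+2) - P (k+1)) := by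
        simp only [hD_def]
        rw [U1 B1, U1 B2, U0 (k+1) (by omega) B1, U0 (k+1) (by omega) B2,
          U0 (k+2) (by omega) B1, U0 (k+2) (by omega) B2, hw2]
      rw [hS, Finset.sum_insert (by simp; omega), Finset.sum_insert (by simp; omega),
        Finset.sum_singleton, hD1, hDe, hDf]
      have := push_ineq hG ha ha' (P (k-1) - P (k-2)) (P (k+2) - P (k+1))
      linarith
    · have hS : Finset.range (n-1) ∩ Finset.Icc (k-2) k = {k-2, k-1} := by
        ext j
        simp only [Finset.mem_inter, Finset.mem_range, Finset.mem_Icc, Finset.mem_insert,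
          Finset.mem_singleton]
        omega
      rw [hS, Finset.sum_insert (by simp; omega), Finset.sum_singleton, hD1, hDe]
      have := push_ineq hG ha ha' (P (k-1) - P (k-2)) v
      have h0 := angle_nonneg ((a:ℝ)•u + (1-a)•v) v
      have hvv := angle_self hv
      linarith
  · have hk1 : k = 1 := by omega
    by_cases hkn2 : k + 2 ≤ n
    · have hS : Finset.range (n-1) ∩ Finset.Icc (k-2) k = {k-1, k} := by
        ext j
        simp only [Finset.mem_inter, Finset.mem_range, Finset.mem_Icc, Finset.mem_insert,
          Finset.mem_singleton]
        omega
      have hDf : D k = angle v (P (k+2) - P (k+1)) - angle (a•u + (1-a)•v) (P (k+2) - P (k+1)) := by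
        simp only [hD_def]
        rw [U1 B1, U1 B2, U0 (k+1) (by omega) B1, U0 (k+1) (by omega) B2,
          U0 (k+2) (by omega) B1, U0 (k+2) (by omega) B2, hw2]
      rw [hS, Finset.sum_insert (by simp; omega), Finset.sum_singleton, hD1, hDf]
      have := push_ineq hG ha ha' u (P (k+2) - P (k+1))
      have h0 := angle_nonneg u ((1-a)•u + a•v)
      have huu := angle_self hu
      linarith
    · have hS : Finset.range (n-1) ∩ Finset.Icc (k-2) k = {k-1} := by
        ext j
        simp only [Finset.mem_inter, Finset.mem_range, Finset.mem_Icc, Finset.mem_singleton]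
        omega
      rw [hS, Finset.sum_singleton, hD1]
      have := push_ineq hG ha ha' u v
      have h0 := angle_nonneg u ((1-a)•u + a•v)
      have h0' := angle_nonneg ((a:ℝ)•u + (1-a)•v) v
      have huu := angle_self hu
      have hvv := angle_self hv
      linarith

lemma inner_combo_G' (u v : V) (c1 d1 c2 d2 : ℝ) :
    ⟪c1•u+d1•v, c1•u+d1•v⟫ * ⟪c2•u+d2•v, c2•u+d2•v⟫ - ⟪c1•u+d1•v, c2•u+d2•v⟫ * ⟪c1•u+d1•v, c2•u+d2•v⟫
      = (c1*d2 - c2*d1)^2 * (⟪u,u⟫*⟪v,v⟫ - ⟪u,v⟫*⟪u,v⟫) := by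
  simp only [inner_add_left, inner_add_right, real_inner_smul_left, real_inner_smul_right,
    real_inner_comm v u]
  ring

/-- Non-collinearity gives strict Cauchy–Schwarz for the edge vectors. -/
lemma strictCS_of_not_collinear {A B C : V}
    (hcol : ¬ Collinear ℝ ({A, B, C} : Set V)) :
    ⟪B - A, C - B⟫ * ⟪B - A, C - B⟫ < ⟪B - A, B - A⟫ * ⟪C - B, C - B⟫ := by
  rcases lt_or_eq_of_le (real_inner_mul_inner_self_le (B-A) (C-B)) with h | h
  · exact h
  exfalso
  apply hcol
  by_cases h0 : B - A = 0
  · have hBA : B = A := sub_eq_zero.1 h0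
    subst hBA
    rw [Set.insert_idem]
    exact collinear_pair ℝ B C
  · have huu : (0:ℝ) < ⟪B-A, B-A⟫ := by
      rw [real_inner_self_eq_norm_sq]
      exact pow_pos (norm_pos_iff.2 h0) 2
    have hw : ⟪B-A,B-A⟫ • (C-B) = ⟪B-A,C-B⟫ • (B-A) := by
      have hzz : ∀ u v : V, ⟪u,v⟫*⟪u,v⟫ = ⟪u,u⟫*⟪v,v⟫ →
          ⟪⟪u,u⟫•v - ⟪u,v⟫•u, ⟪u,u⟫•v - ⟪u,v⟫•u⟫ = (0:ℝ) := by
        intro u v h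
        simp only [inner_sub_left, inner_sub_right, real_inner_smul_left, real_inner_smul_right,
          real_inner_comm u v]
        linear_combination (-⟪u,u⟫ : ℝ) * h
      exact sub_eq_zero.1 (inner_self_eq_zero.1 (hzz (B-A) (C-B) h))
    have hv' : C - B = (⟪B-A,B-A⟫⁻¹ * ⟪B-A,C-B⟫) • (B-A) := by
      have h2 := congrArg (fun x : V => (⟪B-A,B-A⟫⁻¹ : ℝ) • x) hw
      simp only [smul_smul] at h2
      rw [inv_mul_cancel₀ huu.ne', one_smul] at h2
      exact h2
    rw [collinear_iff_of_mem (Set.mem_insert A {B, C})]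
    refine ⟨B - A, fun p hp => ?_⟩
    simp only [Set.mem_insert_iff, Set.mem_singleton_iff] at hp
    rcases hp with hA | hB | hC
    · exact ⟨0, by rw [hA]; simp⟩
    · exact ⟨1, by rw [hB]; simp [vadd_eq_add]⟩
    · refine ⟨⟪B-A,B-A⟫⁻¹ * ⟪B-A,C-B⟫ + 1, ?_⟩
      rw [hC, vadd_eq_add, add_smul, one_smul, ← hv']
      abel


end Aux

open InnerProductGeometry Real
open scoped RealInnerProductSpace

/-- Let `A = P (k-1)`, `B = P k`, `C = P (k+1)` be consecutive non-collinear
vertices of a PL curve `(P 0, …, P n)`.  Move `B` along the median toward the midpoint `M` of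
`AC`, i.e. replace it by `B(s) = (1−s)·B + s·M`.  Then the total curvature of the resulting PL
curve is a monotone non-increasing function of `s ∈ [0,1]`; in particular at each intermediate
time it does not exceed the total curvature of the original curve. -/
theorem plTotalCurvature_antitone_median_push
    (n k : ℕ) (hk : 1 ≤ k) (hkn : k + 1 ≤ n) (P : ℕ → EuclideanSpace ℝ (Fin 3))
    (hcol : ¬ Collinear ℝ ({P (k - 1), P k, P (k + 1)} : Set (EuclideanSpace ℝ (Fin 3)))) :
    AntitoneOn
      (fun s : ℝ => plTotalCurvature n
        (Function.update P k
          (P k + s • (midpoint ℝ (P (k - 1)) (P (k + 1)) - P k))))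
      (Icc (0 : ℝ) 1) := by
  intro s1 hs1 s2 hs2 h12
  simp only
  set M : EuclideanSpace ℝ (Fin 3) := midpoint ℝ (P (k-1)) (P (k+1)) with hM
  rcases eq_or_lt_of_le hs1.2 with h1e | h1lt
  · have h2e : s2 = 1 := le_antisymm hs2.2 (h1e ▸ h12)
    rw [h1e, h2e]
  -- s1 < 1
  set B1 : EuclideanSpace ℝ (Fin 3) := P k + s1 • (M - P k) with hB1
  set B2 : EuclideanSpace ℝ (Fin 3) := P k + s2 • (M - P k) with hB2
  set σ : ℝ := (s2 - s1) / (1 - s1) with hσ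
  have h1s : (0:ℝ) < 1 - s1 := by linarith
  have hσ0 : 0 ≤ σ := div_nonneg (by linarith) h1s.le
  have hσ1 : σ ≤ 1 := (div_le_one h1s).2 (by linarith [hs2.2])
  have hσm : σ * (1 - s1) = s2 - s1 := div_mul_cancel₀ _ h1s.ne'
  have hMB1 : M - B1 = (1 - s1) • (M - P k) := by rw [hB1]; module
  have hB2eq : B2 = B1 + σ • (M - B1) := by
    rw [hMB1, smul_smul, hσm, hB1, hB2]
    module
  -- strict CS for B1 edges
  have hG0 := strictCS_of_not_collinear hcol
  have hu1 : B1 - P (k-1) = (1 - s1/2) • (P k - P (k-1)) + (s1/2) • (P (k+1) - P k) := by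
    rw [hB1, hM, midpoint_eq_smul_add, invOf_eq_inv]
    match_scalars <;> ring
  have hv1 : P (k+1) - B1 = (s1/2) • (P k - P (k-1)) + (1 - s1/2) • (P (k+1) - P k) := by
    rw [hB1, hM, midpoint_eq_smul_add, invOf_eq_inv]
    match_scalars <;> ring
  have hG1 : ⟪B1 - P (k-1), P (k+1) - B1⟫ * ⟪B1 - P (k-1), P (k+1) - B1⟫
      < ⟪B1 - P (k-1), B1 - P (k-1)⟫ * ⟪P (k+1) - B1, P (k+1) - B1⟫ := by
    rw [hu1, hv1]
    have := inner_combo_G' (P k - P (k-1)) (P (k+1) - P k) (1 - s1/2) (s1/2) (s1/2) (1 - s1/2)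
    have hdet : ((1 - s1/2) * (1 - s1/2) - s1/2 * (s1/2))^2 = (1 - s1)^2 := by ring
    nlinarith [this, pow_pos h1s 2]
  exact push_step n k hk hkn P B1 B2 σ hσ0 hσ1 hB2eq hG1
end

section
/- Let P = (P₀, …, Pₙ) be an open PL curve in ℝ³ whose total curvature (sum of exterior angles at interior vertices) is strictly less than π. Then any closed sub-loop of P would have total curvature less than 2π; hence by Fenchel's theorem P contains no closed loop, i.e., the map tracing P is injective. -/
open Filter Set

section Aux

variable {V : Type*} [NormedAddCommGroup V] [InnerProductSpace ℝ V]

local notation "⟪" x ", " y "⟫" => @inner ℝ _ _ x y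

open InnerProductGeometry in
lemma aux_angle_eq_arccos (x y : V) (hx : ‖x‖ = 1) (hy : ‖y‖ = 1) :
    angle x y = Real.arccos ⟪x, y⟫ := by
  rw [angle, hx, hy, one_mul, div_one]

lemma aux_abs_inner_le_one (x y : V) (hx : ‖x‖ = 1) (hy : ‖y‖ = 1) :
    |⟪x, y⟫| ≤ 1 := by
  have := abs_real_inner_le_norm x y
  rwa [hx, hy, one_mul] at this

/-- Key inequality behind the spherical triangle inequality. -/
lemma aux_key_inner (x y z : V) (hx : ‖x‖ = 1) (hy : ‖y‖ = 1) (hz : ‖z‖ = 1) :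
    ⟪x, y⟫ * ⟪y, z⟫ - Real.sqrt (1 - ⟪x, y⟫ ^ 2) * Real.sqrt (1 - ⟪y, z⟫ ^ 2)
      ≤ ⟪x, z⟫ := by
  have hyy : ⟪y, y⟫ = (1 : ℝ) := by rw [real_inner_self_eq_norm_sq, hy]; norm_num
  have h1 : ‖x - ⟪x, y⟫ • y‖ ^ 2 = 1 - ⟪x, y⟫ ^ 2 := by
    rw [norm_sub_sq_real, real_inner_smul_right, norm_smul, hx, hy]
    simp only [mul_one, Real.norm_eq_abs, sq_abs]
    ring
  have h2 : ‖z - ⟪y, z⟫ • y‖ ^ 2 = 1 - ⟪y, z⟫ ^ 2 := by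
    rw [norm_sub_sq_real, real_inner_smul_right, real_inner_comm z y, norm_smul, hz, hy]
    simp only [mul_one, Real.norm_eq_abs, sq_abs]
    ring
  have hs1 : Real.sqrt (1 - ⟪x, y⟫ ^ 2) = ‖x - ⟪x, y⟫ • y‖ := by
    rw [← h1, Real.sqrt_sq (norm_nonneg _)]
  have hs2 : Real.sqrt (1 - ⟪y, z⟫ ^ 2) = ‖z - ⟪y, z⟫ • y‖ := by
    rw [← h2, Real.sqrt_sq (norm_nonneg _)]
  have hinner : ⟪x - ⟪x, y⟫ • y, z - ⟪y, z⟫ • y⟫ = ⟪x, z⟫ - ⟪x, y⟫ * ⟪y, z⟫ := by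
    simp only [inner_sub_left, inner_sub_right, real_inner_smul_left,
      real_inner_smul_right, hyy]
    ring
  have hcs : -(‖x - ⟪x, y⟫ • y‖ * ‖z - ⟪y, z⟫ • y‖) ≤ ⟪x - ⟪x, y⟫ • y, z - ⟪y, z⟫ • y⟫ := by
    have h3 := abs_real_inner_le_norm (x - ⟪x, y⟫ • y) (z - ⟪y, z⟫ • y)
    have h4 := neg_abs_le (⟪x - ⟪x, y⟫ • y, z - ⟪y, z⟫ • y⟫)
    linarith
  rw [hinner] at hcs
  rw [hs1, hs2]
  linarith

open InnerProductGeometry in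
/-- Triangle inequality for angles between unit vectors. -/
lemma aux_angle_triangle (x y z : V) (hx : ‖x‖ = 1) (hy : ‖y‖ = 1) (hz : ‖z‖ = 1) :
    angle x z ≤ angle x y + angle y z := by
  by_cases h : angle x y + angle y z ≤ Real.pi
  · have hxy := aux_abs_inner_le_one x y hx hy
    have hyz := aux_abs_inner_le_one y z hy hz
    have hxz := aux_abs_inner_le_one x z hx hz
    rw [abs_le] at hxy hyz hxz
    have hcos : Real.cos (angle x y + angle y z) ≤ ⟪x, z⟫ := by
      rw [Real.cos_add, aux_angle_eq_arccos x y hx hy, aux_angle_eq_arccos y z hy hz,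
        Real.cos_arccos hxy.1 hxy.2, Real.cos_arccos hyz.1 hyz.2,
        Real.sin_arccos, Real.sin_arccos]
      exact aux_key_inner x y z hx hy hz
    have harc : Real.arccos ⟪x, z⟫ ≤ Real.arccos (Real.cos (angle x y + angle y z)) := by
      rw [Real.arccos_eq_pi_div_two_sub_arcsin, Real.arccos_eq_pi_div_two_sub_arcsin]
      have := Real.monotone_arcsin hcos
      linarith
    rw [aux_angle_eq_arccos x z hx hz]
    calc Real.arccos ⟪x, z⟫ ≤ Real.arccos (Real.cos (angle x y + angle y z)) := harc
      _ = angle x y + angle y z := Real.arccos_cos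
          (by have := angle_nonneg x y; have := angle_nonneg y z; linarith) h
  · push_neg at h
    linarith [angle_le_pi x z]

open InnerProductGeometry in
/-- Chained triangle inequality along a sequence of unit vectors. -/
lemma aux_angle_chain (u : ℕ → V) (i j : ℕ) (hij : i ≤ j) (hu : ∀ l ≤ j, ‖u l‖ = 1) :
    angle (u i) (u j) ≤ ∑ l ∈ Finset.Ico i j, angle (u l) (u (l + 1)) := by
  induction j, hij using Nat.le_induction with
  | base =>
    have : u i ≠ 0 := by
      intro h
      have := hu i le_rfl
      rw [h, norm_zero] at this; norm_num at this
    simp [angle_self this]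
  | succ j hij ih =>
    have hu' : ∀ l ≤ j, ‖u l‖ = 1 := fun l hl => hu l (hl.trans (Nat.le_succ j))
    have h1 := aux_angle_triangle (u i) (u j) (u (j + 1)) (hu' i hij) (hu' j le_rfl)
      (hu (j + 1) le_rfl)
    have h2 := ih hu'
    rw [Finset.sum_Ico_succ_top hij]
    linarith

open InnerProductGeometry in
/-- A point on the geodesic between two unit vectors, at angular distance `θ` from `p`. -/
lemma aux_geodesic_point (p q : V) (hp : ‖p‖ = 1) (hq : ‖q‖ = 1)
    (ha0 : 0 < angle p q) (haπ : angle p q < Real.pi)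
    (θ : ℝ) (hθ0 : 0 ≤ θ) (hθa : θ ≤ angle p q) :
    ∃ v : V, ‖v‖ = 1 ∧ angle v p = θ ∧ angle v q = angle p q - θ := by
  set a := angle p q with hadef
  have hsa : 0 < Real.sin a := Real.sin_pos_of_pos_of_lt_pi ha0 haπ
  have hpq : ⟪p, q⟫ = Real.cos a := by
    have := cos_angle p q
    rw [hp, hq, one_mul, div_one] at this
    exact this.symm
  have hpp : ⟪p, p⟫ = (1 : ℝ) := by rw [real_inner_self_eq_norm_sq, hp]; norm_num
  have hqq : ⟪q, q⟫ = (1 : ℝ) := by rw [real_inner_self_eq_norm_sq, hq]; norm_num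
  set v : V := (Real.sin (a - θ) / Real.sin a) • p + (Real.sin θ / Real.sin a) • q with hvdef
  have hvp : ⟪v, p⟫ = Real.cos θ := by
    rw [hvdef, inner_add_left, real_inner_smul_left, real_inner_smul_left, hpp,
      real_inner_comm p q, hpq, Real.sin_sub]
    field_simp
    ring_nf
  have hvq : ⟪v, q⟫ = Real.cos (a - θ) := by
    have hsθ : Real.sin θ = Real.sin a * Real.cos (a - θ) - Real.cos a * Real.sin (a - θ) := by
      have : θ = a - (a - θ) := by ring
      rw [this, Real.sin_sub]
      ring_nf
    rw [hvdef, inner_add_left, real_inner_smul_left, real_inner_smul_left, hqq, hpq, hsθ]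
    field_simp
    ring_nf
  have hvv : ⟪v, v⟫ = (1 : ℝ) := by
    have expand : ⟪v, v⟫ = (Real.sin (a - θ) / Real.sin a) * ⟪v, p⟫
        + (Real.sin θ / Real.sin a) * ⟪v, q⟫ := by
      nth_rewrite 2 [hvdef]
      rw [inner_add_right, real_inner_smul_right, real_inner_smul_right]
    rw [expand, hvp, hvq]
    have h := Real.sin_add (a - θ) θ
    have h2 : a - θ + θ = a := by ring
    rw [h2] at h
    field_simp
    linarith [h]
  have hv : ‖v‖ = 1 := by
    have : ‖v‖ ^ 2 = 1 := by rw [← real_inner_self_eq_norm_sq, hvv]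
    nlinarith [norm_nonneg v]
  refine ⟨v, hv, ?_, ?_⟩
  · rw [aux_angle_eq_arccos v p hv hp, hvp, Real.arccos_cos hθ0 (by linarith)]
  · rw [aux_angle_eq_arccos v q hv hq, hvq,
      Real.arccos_cos (by linarith) (by linarith)]

open InnerProductGeometry in
/-- If the unit vectors `u 0, …, u (n-1)` form a spherical path of total length `S < π`,
then they all lie within spherical distance `S/2` of some unit vector `v`. -/
lemma aux_exists_pole (n : ℕ) (hn : 1 ≤ n) (u : ℕ → V) (hu : ∀ j < n, ‖u j‖ = 1)
    (S : ℝ) (hSdef : S = ∑ j ∈ Finset.range (n - 1), angle (u j) (u (j + 1)))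
    (hSπ : S < Real.pi) :
    ∃ v : V, ‖v‖ = 1 ∧ ∀ j < n, angle v (u j) ≤ S / 2 := by
  set A : ℕ → ℝ := fun j => ∑ i ∈ Finset.range j, angle (u i) (u (i + 1)) with hAdef
  clear_value A
  have hAmono : ∀ i j : ℕ, i ≤ j → A i ≤ A j := by
    intro i j hij
    simp only [hAdef]
    apply Finset.sum_le_sum_of_subset_of_nonneg (Finset.range_subset_range.2 hij)
    intro k _ _
    exact angle_nonneg _ _
  have hA0 : A 0 = 0 := by simp [hAdef]
  have hAS : A (n - 1) = S := by simp only [hAdef]; exact hSdef.symm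
  have hASle : ∀ j, j ≤ n - 1 → A j ≤ S := fun j hj => hAS ▸ hAmono j (n - 1) hj
  have hAnonneg : ∀ j, 0 ≤ A j := fun j => hA0 ▸ hAmono 0 j (Nat.zero_le j)
  have hchain : ∀ i j : ℕ, i ≤ j → j ≤ n - 1 → angle (u i) (u j) ≤ A j - A i := by
    intro i j hij hjn
    have h1 : angle (u i) (u j) ≤ ∑ l ∈ Finset.Ico i j, angle (u l) (u (l + 1)) := by
      apply aux_angle_chain u i j hij
      intro l hl
      exact hu l (by omega)
    have h2 : ∑ l ∈ Finset.Ico i j, angle (u l) (u (l + 1)) = A j - A i := by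
      rw [hAdef]
      simp only
      rw [Finset.range_eq_Ico, Finset.range_eq_Ico,
        ← Finset.sum_Ico_consecutive _ (Nat.zero_le i) hij]
      ring
    linarith
  have hS0 : 0 ≤ S := hA0 ▸ hAS ▸ hAmono 0 (n - 1) (Nat.zero_le _)
  rcases eq_or_lt_of_le hS0 with hS | hS
  · -- S = 0 : all the uⱼ coincide with u 0
    refine ⟨u 0, hu 0 hn, fun j hj => ?_⟩
    have h1 := hchain 0 j (Nat.zero_le j) (by omega)
    have h2 := hASle j (by omega)
    have h3 := angle_nonneg (u 0) (u j)
    have := hAnonneg j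
    linarith
  · -- S > 0 : find the crossing edge m
    have hfind : ∀ k, k ≤ n - 1 → S / 2 < A k →
        ∃ m, m + 1 ≤ k ∧ A m ≤ S / 2 ∧ S / 2 < A (m + 1) := by
      intro k
      induction k with
      | zero => intro _ hk; rw [hA0] at hk; linarith
      | succ k ih =>
        intro hk1 hk2
        by_cases h : S / 2 < A k
        · obtain ⟨m, hm1, hm2, hm3⟩ := ih (by omega) h
          exact ⟨m, by omega, hm2, hm3⟩
        · exact ⟨k, le_rfl, by linarith, hk2⟩
    obtain ⟨m, hm1, hm2, hm3⟩ := hfind (n - 1) le_rfl (by rw [hAS]; linarith)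
    have hmn : m + 1 ≤ n - 1 := hm1
    have hAm1 : A (m + 1) = A m + angle (u m) (u (m + 1)) := by
      rw [hAdef]; simp [Finset.sum_range_succ]
    set a := angle (u m) (u (m + 1)) with hadef2
    clear_value a
    have ha0 : 0 < a := by linarith
    have haS : a ≤ S := by
      have := hASle (m + 1) hmn
      have := hAnonneg m
      linarith
    set θ := S / 2 - A m with hθdef
    clear_value θ
    have hθ0 : 0 ≤ θ := by simp [hθdef]; linarith
    have hθa : θ ≤ a := by rw [hθdef]; linarith
    have ha0' : 0 < angle (u m) (u (m + 1)) := hadef2 ▸ ha0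
    have haπ' : angle (u m) (u (m + 1)) < Real.pi := hadef2 ▸ (by linarith : a < Real.pi)
    have hθa' : θ ≤ angle (u m) (u (m + 1)) := hadef2 ▸ hθa
    obtain ⟨v, hv1, hv2, hv3⟩ := aux_geodesic_point (u m) (u (m + 1))
      (hu m (by omega)) (hu (m + 1) (by omega)) ha0' haπ' θ hθ0 hθa'
    rw [← hadef2] at hv3
    refine ⟨v, hv1, fun j hj => ?_⟩
    have hjn : j ≤ n - 1 := by omega
    rcases le_or_gt j m with hjm | hjm
    · -- j ≤ m
      have ht := aux_angle_triangle v (u m) (u j) hv1 (hu m (by omega)) (hu j hj)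
      have hc := hchain j m hjm (by omega)
      have hcomm := angle_comm (u m) (u j)
      have := hAnonneg j
      rw [hv2] at ht
      linarith [ht, hc, hcomm, hm2, hθ0]
    · -- m + 1 ≤ j
      have ht := aux_angle_triangle v (u (m + 1)) (u j) hv1 (hu (m + 1) (by omega)) (hu j hj)
      have hc := hchain (m + 1) j hjm (by omega)
      have := hASle j hjn
      rw [hv3] at ht
      linarith [ht, hc, hAm1, hadef2, hθdef, this]

end Aux


local notation "⟪" x ", " y "⟫" => @inner ℝ _ _ x y

/-- An open PL curve `P = (P₀, …, Pₙ)` in `ℝ³` whose total curvature is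
strictly less than `π` contains no closed loop: there are no parameters `s < t` in `[0, n]`
with `P(s) = P(t)` (a closed sub-loop would have total curvature `< 2π`, contradicting
Fenchel's theorem); i.e. the map tracing `P` is injective. -/
theorem plPath_no_closed_loop_of_totalCurvature_lt_pi
    (n : ℕ) (hn : 1 ≤ n) (P : ℕ → EuclideanSpace ℝ (Fin 3))
    (hdist : ∀ j < n, P j ≠ P (j + 1))
    (htc : plTotalCurvature n P < Real.pi) :
    ∀ s t : ℝ, 0 ≤ s → s < t → t ≤ n → plPath P s ≠ plPath P t := by
  classical
  set e : ℕ → EuclideanSpace ℝ (Fin 3) := fun j => P (j + 1) - P j with hedef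
  have he : ∀ j < n, e j ≠ 0 := by
    intro j hj
    simp only [hedef]
    exact sub_ne_zero.2 (Ne.symm (hdist j hj))
  set u : ℕ → EuclideanSpace ℝ (Fin 3) := fun j => ‖e j‖⁻¹ • e j with hudef
  have hu : ∀ j < n, ‖u j‖ = 1 := by
    intro j hj
    simp only [hudef]
    exact norm_smul_inv_norm (he j hj)
  have hSeq : plTotalCurvature n P
      = ∑ j ∈ Finset.range (n - 1), InnerProductGeometry.angle (u j) (u (j + 1)) := by
    unfold plTotalCurvature
    apply Finset.sum_congr rfl
    intro j hj
    rw [Finset.mem_range] at hj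
    have h1 : j < n := by omega
    have h2 : j + 1 < n := by omega
    simp only [hudef]
    rw [InnerProductGeometry.angle_smul_left_of_pos _ _
        (inv_pos.2 (norm_pos_iff.2 (he _ h1))),
      InnerProductGeometry.angle_smul_right_of_pos _ _
        (inv_pos.2 (norm_pos_iff.2 (he _ h2)))]
  obtain ⟨v, hv1, hv2⟩ := aux_exists_pole n hn u hu (plTotalCurvature n P) hSeq htc
  have hhalf : ∀ j < n, InnerProductGeometry.angle v (u j) < Real.pi / 2 := by
    intro j hj
    have := hv2 j hj
    linarith
  have hpos : ∀ j < n, (0 : ℝ) < ⟪v, e j⟫ := by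
    intro j hj
    have hen : (0 : ℝ) < ‖e j‖ := norm_pos_iff.2 (he j hj)
    have hae : InnerProductGeometry.angle v (e j) = InnerProductGeometry.angle v (u j) := by
      conv_rhs => rw [hudef]
      simp only
      rw [InnerProductGeometry.angle_smul_right_of_pos _ _ (inv_pos.2 hen)]
    have hlt : InnerProductGeometry.angle v (e j) < Real.pi / 2 := hae ▸ hhalf j hj
    have hge : 0 ≤ InnerProductGeometry.angle v (e j) := InnerProductGeometry.angle_nonneg _ _
    have hcospos : 0 < Real.cos (InnerProductGeometry.angle v (e j)) := by
      apply Real.cos_pos_of_mem_Ioo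
      constructor
      · have := Real.pi_pos; linarith
      · exact hlt
    have hcos := InnerProductGeometry.cos_angle v (e j)
    rw [hv1, one_mul, eq_div_iff hen.ne'] at hcos
    rw [← hcos]
    exact mul_pos hcospos hen
  have hstep : ∀ j, ⟪v, P j⟫ + ⟪v, e j⟫ = ⟪v, P (j + 1)⟫ := by
    intro j
    simp only [hedef]
    rw [inner_sub_right]
    ring
  have hmono : ∀ j k : ℕ, j < k → k ≤ n → ⟪v, P j⟫ < ⟪v, P k⟫ := by
    intro j k hjk hkn
    induction k, hjk using Nat.le_induction with
    | base =>
      have := hpos j (by omega)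
      have := hstep j
      linarith
    | succ k hk ih =>
      have h1 := ih (by omega)
      have h2 := hpos k (by omega)
      have h3 := hstep k
      linarith
  have hg : ∀ t : ℝ, ⟪v, plPath P t⟫
      = ⟪v, P ⌊t⌋₊⟫ + (t - (⌊t⌋₊ : ℝ)) * ⟪v, e ⌊t⌋₊⟫ := by
    intro t
    unfold plPath
    rw [inner_add_right, real_inner_smul_right]
  intro s t hs0 hst htn heq
  have ht0 : (0 : ℝ) ≤ t := le_trans hs0 hst.le
  have hjs : ((⌊s⌋₊ : ℝ)) ≤ s := Nat.floor_le hs0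
  have hsj1 : s < (⌊s⌋₊ : ℝ) + 1 := Nat.lt_floor_add_one s
  have hkt : ((⌊t⌋₊ : ℝ)) ≤ t := Nat.floor_le ht0
  have hkn : ⌊t⌋₊ ≤ n := by
    have h := Nat.floor_le_floor htn
    rwa [Nat.floor_natCast] at h
  have hjn : ⌊s⌋₊ < n := (Nat.floor_lt hs0).2 (lt_of_lt_of_le hst htn)
  have hjk : ⌊s⌋₊ ≤ ⌊t⌋₊ := Nat.floor_le_floor hst.le
  have key : ⟪v, plPath P s⟫ < ⟪v, plPath P t⟫ := by
    rw [hg s, hg t]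
    rcases eq_or_lt_of_le hjk with hjk' | hjk'
    · rw [← hjk']
      have hw := hpos ⌊s⌋₊ hjn
      have hmul : (s - (⌊s⌋₊ : ℝ)) * ⟪v, e ⌊s⌋₊⟫ < (t - (⌊s⌋₊ : ℝ)) * ⟪v, e ⌊s⌋₊⟫ := by
        apply mul_lt_mul_of_pos_right _ hw
        linarith
      linarith
    · have h1 : ⟪v, P ⌊s⌋₊⟫ + (s - (⌊s⌋₊ : ℝ)) * ⟪v, e ⌊s⌋₊⟫ < ⟪v, P (⌊s⌋₊ + 1)⟫ := by
        have hw := hpos ⌊s⌋₊ hjn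
        have hst' := hstep ⌊s⌋₊
        nlinarith
      have h2 : ⟪v, P (⌊s⌋₊ + 1)⟫ ≤ ⟪v, P ⌊t⌋₊⟫ := by
        rcases eq_or_lt_of_le (show ⌊s⌋₊ + 1 ≤ ⌊t⌋₊ from hjk') with h | h
        · rw [h]
        · exact (hmono (⌊s⌋₊ + 1) ⌊t⌋₊ h hkn).le
      have h3 : ⟪v, P ⌊t⌋₊⟫ ≤ ⟪v, P ⌊t⌋₊⟫ + (t - (⌊t⌋₊ : ℝ)) * ⟪v, e ⌊t⌋₊⟫ := by
        rcases lt_or_eq_of_le hkn with hkn' | hkn'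
        · have hw := hpos ⌊t⌋₊ hkn'
          nlinarith
        · have htkn : t = (⌊t⌋₊ : ℝ) := by
            rw [hkn']
            rw [hkn'] at hkt
            exact le_antisymm htn hkt
          rw [← htkn]
          simp
      linarith
  rw [heq] at key
  exact lt_irrefl _ key
end
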